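/- arXiv:2109.03059 — 4 statements merged into one kernel-verified Lean document; each statement's English description precedes it below -/
import Mathlib

section
/- Let p ∈ (0,∞) and (b_1, b_2) ∈ B_p with associated σ. Then b_1(t) ≈ b_1(σ^{-1}(t^{1/p})^p) ≈ b_1(σ(t^{1/p})^p) for every t ∈ (0,1). -/
open MeasureTheory Set ENNReal Filter Topology

noncomputable section

/-- The nonincreasing rearrangement of a real-valued function, valued in `ℝ≥0∞`. -/
def rearr {α : Type*} [MeasurableSpace α] (μ : Measure α) (f : α → ℝ) (t : ℝ) : ℝ≥0∞ :=
  sInf {lam : ℝ≥0∞ | μ {x | lam < ENNReal.ofReal |f x|} ≤ ENNReal.ofReal t}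

/-- Lebesgue measure restricted to the interval `(0,1)`. -/
def mRes : Measure ℝ := volume.restrict (Ioo (0:ℝ) 1)

/-- Rearrangement of an `ℝ≥0∞`-valued function on `(0,1)`. -/
def rearrE (f : ℝ → ℝ≥0∞) (t : ℝ) : ℝ≥0∞ :=
  sInf {lam : ℝ≥0∞ | mRes {x | lam < f x} ≤ ENNReal.ofReal t}

/-- The Peetre K-functional associated with two extended-real-valued functionals. -/
def Kfun {α : Type*} (N0 N1 : (α → ℝ) → ℝ≥0∞) (f : α → ℝ) (t : ℝ) : ℝ≥0∞ :=
  ⨅ (g : α → ℝ) (h : α → ℝ) (_ : f = g + h), N0 g + ENNReal.ofReal t * N1 h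

/-- Orlicz–Karamata quasinorm `‖b(t) f^*(t)‖_{L^p(0,1)}` for finite `p`. -/
def OKnorm {α : Type*} [MeasurableSpace α] (p : ℝ) (b : ℝ → ℝ) (μ : Measure α)
    (f : α → ℝ) : ℝ≥0∞ :=
  (∫⁻ t in Ioo (0:ℝ) 1, (ENNReal.ofReal (b t) * rearr μ f t) ^ p) ^ (1/p)

/-- Orlicz–Karamata quasinorm `sup_{0<t<1} b(t) f^*(t)`, the case `p = ∞`. -/
def OKnormInf {α : Type*} [MeasurableSpace α] (b : ℝ → ℝ) (μ : Measure α)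
    (f : α → ℝ) : ℝ≥0∞ :=
  ⨆ t ∈ Ioo (0:ℝ) 1, ENNReal.ofReal (b t) * rearr μ f t

/-- Two functions are equivalent (≈) on a set. -/
def EquivOn (u v : ℝ → ℝ) (s : Set ℝ) : Prop :=
  ∃ c C : ℝ, 0 < c ∧ 0 < C ∧ ∀ t ∈ s, c * v t ≤ u t ∧ u t ≤ C * v t

/-- A slowly varying function on `(0,1)`. -/
def SlowlyVarying (b : ℝ → ℝ) : Prop :=
  Measurable b ∧ (∀ t ∈ Ioo (0:ℝ) 1, 0 < b t) ∧
  ∀ ε : ℝ, 0 < ε →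
    (∃ be : ℝ → ℝ, MonotoneOn be (Ioo (0:ℝ) 1) ∧
      EquivOn (fun t => t ^ ε * b t) be (Ioo (0:ℝ) 1)) ∧
    (∃ bm : ℝ → ℝ, AntitoneOn bm (Ioo (0:ℝ) 1) ∧
      EquivOn (fun t => t ^ (-ε) * b t) bm (Ioo (0:ℝ) 1))

/-- `σ` is the increasing bijection of `[0,1]` with
`t^p = (1/C) ∫_0^{σ(t)^p} (b₁/b₂)^p`. -/
def IsSigma (p : ℝ) (b1 b2 : ℝ → ℝ) (σ : ℝ → ℝ) : Prop :=
  StrictMonoOn σ (Icc (0:ℝ) 1) ∧ σ '' (Icc (0:ℝ) 1) = Icc (0:ℝ) 1 ∧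
  σ 0 = 0 ∧ σ 1 = 1 ∧
  IntegrableOn (fun s => (b1 s / b2 s) ^ p) (Ioo (0:ℝ) 1) ∧
  (0 < ∫ s in Ioo (0:ℝ) 1, (b1 s / b2 s) ^ p) ∧
  ∀ t ∈ Icc (0:ℝ) 1,
    t ^ p = (∫ s in Ioo (0:ℝ) 1, (b1 s / b2 s) ^ p)⁻¹ *
      ∫ s in Ioo (0:ℝ) ((σ t) ^ p), (b1 s / b2 s) ^ p

/-- `σi` is the inverse function of `σ` on `[0,1]`. -/
def IsSigmaInv (σ σi : ℝ → ℝ) : Prop :=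
  MapsTo σi (Icc (0:ℝ) 1) (Icc (0:ℝ) 1) ∧
  ∀ t ∈ Icc (0:ℝ) 1, σ (σi t) = t ∧ σi (σ t) = t

/-- A `(p,b₁,b₂)`-gaussible operator. -/
def Gaussible {α β : Type*} [MeasurableSpace α] [MeasurableSpace β] (p : ℝ)
    (b1 b2 σi : ℝ → ℝ) (μ : Measure α) (ν : Measure β)
    (T : (α → ℝ) → β → ℝ) : Prop :=
  ∃ c : ℝ≥0∞, c ≠ ⊤ ∧ ∀ f : α → ℝ, MemLp f (ENNReal.ofReal p) μ →
    ∀ t ∈ Ioo (0:ℝ) 1,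
      ∫⁻ s in Ioo (0:ℝ) t, (rearr ν (T f) s * ENNReal.ofReal (b1 s)) ^ p ≤
        c * ∫⁻ s in Ioo (0:ℝ) t,
          (rearr μ f ((σi (s ^ (1/p))) ^ p) * ENNReal.ofReal (b1 s / b2 s)) ^ p

/-- A rearrangement-invariant quasi-Banach function norm on `(0,1)`. -/
def IsRIQnorm (N : (ℝ → ℝ≥0∞) → ℝ≥0∞) : Prop :=
  (∀ f, (∀ᵐ t ∂mRes, f t = 0) ↔ N f = 0) ∧
  (∀ f (c : ℝ≥0∞), N (fun t => c * f t) = c * N f) ∧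
  (∃ C : ℝ≥0∞, 1 ≤ C ∧ C ≠ ⊤ ∧ ∀ f g, N (fun t => f t + g t) ≤ C * (N f + N g)) ∧
  (∀ f g, (∀ᵐ t ∂mRes, f t ≤ g t) → N f ≤ N g) ∧
  (∀ (f : ℕ → ℝ → ℝ≥0∞) (g : ℝ → ℝ≥0∞), (∀ n, ∀ᵐ t ∂mRes, f n t ≤ f (n+1) t) →
      (∀ᵐ t ∂mRes, (⨆ n, f n t) = g t) → N g = ⨆ n, N (f n)) ∧
  (N (fun _ => 1) ≠ ⊤) ∧
  (∀ f g, (∀ t ∈ Ioo (0:ℝ) 1, rearrE f t = rearrE g t) → N f = N g)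

/-- A rearrangement-invariant Banach function norm on `(0,1)`. -/
def IsRIBnorm (N : (ℝ → ℝ≥0∞) → ℝ≥0∞) : Prop :=
  IsRIQnorm N ∧ (∀ f g, N (fun t => f t + g t) ≤ N f + N g) ∧
  ∃ C : ℝ≥0∞, C ≠ ⊤ ∧ ∀ f, (∫⁻ t in Ioo (0:ℝ) 1, f t) ≤ C * N f

/-- The norm of the space `X^{1/p}`, i.e. `‖f‖ = ‖f^{1/p}‖_X^p`. -/
def pPow (p : ℝ) (N : (ℝ → ℝ≥0∞) → ℝ≥0∞) (f : ℝ → ℝ≥0∞) : ℝ≥0∞ :=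
  (N (fun t => (f t) ^ (1/p))) ^ p

/-- `p`-convexity of a rearrangement-invariant quasinorm. -/
def PConvex (p : ℝ) (N : (ℝ → ℝ≥0∞) → ℝ≥0∞) : Prop :=
  IsRIBnorm (pPow p N)

/-- The associate norm. -/
def assocN (N : (ℝ → ℝ≥0∞) → ℝ≥0∞) (f : ℝ → ℝ≥0∞) : ℝ≥0∞ :=
  ⨆ (g : ℝ → ℝ≥0∞) (_ : N g ≤ 1), ∫⁻ t in Ioo (0:ℝ) 1, f t * g t

/-- The norm in the rearrangement-invariant space over `(R,μ)` with representation norm `N`. -/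
def spaceNorm {α : Type*} [MeasurableSpace α] (N : (ℝ → ℝ≥0∞) → ℝ≥0∞)
    (μ : Measure α) (f : α → ℝ) : ℝ≥0∞ :=
  N (rearr μ f)

/-- The operator `U_{b₁,b₂,p} f(t) = f^*(σ⁻¹(t^{1/p})^p) b₂(t)⁻¹`. -/
def Uop (p : ℝ) (b2 σi : ℝ → ℝ) (f : ℝ → ℝ) (t : ℝ) : ℝ≥0∞ :=
  rearr mRes f ((σi (t ^ (1/p))) ^ p) * ENNReal.ofReal (b2 t)⁻¹

/-- The operator `S_{b₁,p} f(t) = (∫_t^1 f(s)^p/(s b₁(s)^p) ds)^{1/p}`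
for nonnegative `f`. -/
def SopE (p : ℝ) (b1 : ℝ → ℝ) (f : ℝ → ℝ≥0∞) (t : ℝ) : ℝ≥0∞ :=
  (∫⁻ s in Ioo t 1, (f s) ^ p / ENNReal.ofReal (s * b1 s ^ p)) ^ (1/p)

/-- The operator `T_{b₁,b₂,p} f(t) = sup_{t ≤ s < 1} f^*(σ(s^{1/p})^p)/b₁(σ(s^{1/p})^p)^p`. -/
def Topr (p : ℝ) (b1 σ : ℝ → ℝ) (f : ℝ → ℝ≥0∞) (t : ℝ) : ℝ≥0∞ :=
  ⨆ s ∈ Ico t 1, rearrE f ((σ (s ^ (1/p))) ^ p) / ENNReal.ofReal ((b1 ((σ (s ^ (1/p))) ^ p)) ^ p)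

/-- The class `B_p` of pairs of slowly varying functions. -/
def InBp (p : ℝ) (b1 b2 : ℝ → ℝ) : Prop :=
  SlowlyVarying b1 ∧ SlowlyVarying b2 ∧
  ContinuousOn b1 (Ioo (0:ℝ) 1) ∧ ContinuousOn b2 (Ioo (0:ℝ) 1) ∧
  AntitoneOn b1 (Ioo (0:ℝ) 1) ∧ MonotoneOn b2 (Ioo (0:ℝ) 1) ∧
  (∃ δ ∈ Ioo (0:ℝ) 1, EquivOn b1 (fun t => b1 (t * (b1 t / b2 t) ^ p)) (Ioo (0:ℝ) δ)) ∧
  (∃ M : ℝ, ∀ t ∈ Ioo (0:ℝ) 1, b2 t ^ p * ∫ s in Ioo t 1, 1 / (s * b1 s ^ p) ≤ M)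

/-- Boundedness of an operator from `X(R,μ)` to `Y(S,ν)`. -/
def BddOp {α β : Type*} [MeasurableSpace α] [MeasurableSpace β]
    (NX NY : (ℝ → ℝ≥0∞) → ℝ≥0∞) (μ : Measure α) (ν : Measure β)
    (T : (α → ℝ) → β → ℝ) : Prop :=
  ∃ c : ℝ≥0∞, 0 < c ∧ c ≠ ⊤ ∧ ∀ f : α → ℝ, spaceNorm NY ν (T f) ≤ c * spaceNorm NX μ f

/-- The Brudnyi–Krugljak class `B(X₀,X₁;Y₀,Y₁)`. -/
def ClassB {α β : Type*} (N0 N1 : (α → ℝ) → ℝ≥0∞) (M0 M1 : (β → ℝ) → ℝ≥0∞)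
    (T : (α → ℝ) → β → ℝ) : Prop :=
  ∃ C : ℝ≥0∞, C ≠ ⊤ ∧ ∀ f0 f1 : α → ℝ, N0 f0 ≠ ⊤ → N1 f1 ≠ ⊤ →
    ∀ ε : ℝ≥0∞, 0 < ε → ∃ g0 g1 : β → ℝ, T (f0 + f1) = g0 + g1 ∧
      M0 g0 ≤ C * N0 f0 + ε ∧ M1 g1 ≤ C * N1 f1 + ε

end
lemma my_rpow_inv_rpow {t p : ℝ} (ht : 0 ≤ t) (hp : p ≠ 0) : (t ^ (1/p)) ^ p = t := by
  rw [← Real.rpow_mul ht, one_div, inv_mul_cancel₀ hp, Real.rpow_one]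

lemma my_rpow_rpow_inv {x p : ℝ} (hx : 0 ≤ x) (hp : p ≠ 0) : (x ^ p) ^ (1/p) = x := by
  rw [← Real.rpow_mul hx, mul_one_div, div_self hp, Real.rpow_one]

/-- ratio comparability for slowly varying functions -/
lemma slow_ratio {b : ℝ → ℝ} (hsv : SlowlyVarying b) :
    ∃ k : ℝ, 0 < k ∧ ∀ M : ℝ, 1 ≤ M → ∀ x ∈ Ioo (0:ℝ) 1, ∀ y ∈ Ioo (0:ℝ) 1,
      x ≤ y → y ≤ M * x → k / M * b x ≤ b y := by
  obtain ⟨⟨be, hmono, c, C, hc, hC, hbe⟩, -⟩ := hsv.2.2 1 one_pos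
  refine ⟨c / C, div_pos hc hC, ?_⟩
  intro M hM x hx y hy hxy hyM
  have hbx := hsv.2.1 x hx
  have h1 := (hbe x hx).2
  have h2 := (hbe y hy).1
  simp only [Real.rpow_one] at h1 h2
  have hbemono : be x ≤ be y := hmono hx hy hxy
  have hby := hsv.2.1 y hy
  have hxpos := hx.1
  have hypos := hy.1
  have e1 : c * be x ≤ y * b y := le_trans (mul_le_mul_of_nonneg_left hbemono hc.le) h2
  have e2 : c * (x * b x) ≤ C * (y * b y) := by nlinarith
  have e3 : c * (x * b x) ≤ C * M * (x * b y) := by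
    nlinarith [mul_le_mul_of_nonneg_left (mul_le_mul_of_nonneg_right hyM hby.le) hC.le]
  have e4 : c * b x ≤ C * M * b y :=
    (mul_le_mul_iff_right₀ hxpos).mp (by linarith : x * (c * b x) ≤ x * (C * M * b y))
  rw [div_div, div_mul_eq_mul_div, div_le_iff₀ (by positivity)]
  linarith

section IntLemmas
variable {g : ℝ → ℝ}

lemma int_lower (hint : IntegrableOn g (Ioo 0 1)) (hanti : AntitoneOn g (Ioo 0 1))
    {t : ℝ} (ht : t ∈ Ioo (0:ℝ) 1) : t * g t ≤ ∫ s in Ioo (0:ℝ) t, g s := by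
  have hsub : Ioo (0:ℝ) t ⊆ Ioo 0 1 := Ioo_subset_Ioo le_rfl ht.2.le
  have hint' := hint.mono_set hsub
  have hle : ∫ _s in Ioo (0:ℝ) t, g t ≤ ∫ s in Ioo (0:ℝ) t, g s := by
    refine setIntegral_mono_on (integrableOn_const ?_) hint' measurableSet_Ioo ?_
    · rw [Real.volume_Ioo]; exact ofReal_lt_top.ne
    · exact fun s hs => hanti (hsub hs) ht hs.2.le
  rwa [setIntegral_const, measureReal_def, Real.volume_Ioo, smul_eq_mul,
    toReal_ofReal (by linarith [ht.1] : (0:ℝ) ≤ t - 0), sub_zero] at hle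

lemma int_upper (hint : IntegrableOn g (Ioo 0 1)) (hanti : AntitoneOn g (Ioo 0 1))
    {t : ℝ} (ht : t ∈ Ioo (0:ℝ) 1) : (∫ s in Ioo t 1, g s) ≤ (1 - t) * g t := by
  have hsub : Ioo t (1:ℝ) ⊆ Ioo 0 1 := Ioo_subset_Ioo ht.1.le le_rfl
  have hint' := hint.mono_set hsub
  have hle : (∫ s in Ioo t (1:ℝ), g s) ≤ ∫ _s in Ioo t (1:ℝ), g t := by
    refine setIntegral_mono_on hint' (integrableOn_const ?_) measurableSet_Ioo ?_
    · rw [Real.volume_Ioo]; exact ofReal_lt_top.ne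
    · exact fun s hs => hanti ht (hsub hs) hs.1.le
  rwa [setIntegral_const, measureReal_def, Real.volume_Ioo, smul_eq_mul,
    toReal_ofReal (by linarith [ht.2] : (0:ℝ) ≤ 1 - t)] at hle

lemma int_pos_right (hint : IntegrableOn g (Ioo 0 1)) (hanti : AntitoneOn g (Ioo 0 1))
    (hpos : ∀ s ∈ Ioo (0:ℝ) 1, 0 < g s)
    {t : ℝ} (ht : t ∈ Ioo (0:ℝ) 1) : 0 < ∫ s in Ioo t 1, g s := by
  set m := (t + 1) / 2 with hm
  have hmmem : m ∈ Ioo (0:ℝ) 1 := ⟨by nlinarith [ht.1, ht.2], by nlinarith [ht.2]⟩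
  have htm : t < m := by nlinarith [ht.2]
  have hsub1 : Ioo t (1:ℝ) ⊆ Ioo 0 1 := Ioo_subset_Ioo ht.1.le le_rfl
  have hsub2 : Ioo t m ⊆ Ioo t 1 := Ioo_subset_Ioo le_rfl hmmem.2.le
  have hint1 := hint.mono_set hsub1
  have step1 : (m - t) * g m ≤ ∫ s in Ioo t m, g s := by
    have hle : ∫ _s in Ioo t m, g m ≤ ∫ s in Ioo t m, g s := by
      refine setIntegral_mono_on (integrableOn_const ?_)
        (hint1.mono_set hsub2) measurableSet_Ioo ?_
      · rw [Real.volume_Ioo]; exact ofReal_lt_top.ne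
      · exact fun s hs => hanti (hsub1 (hsub2 hs)) hmmem hs.2.le
    rwa [setIntegral_const, measureReal_def, Real.volume_Ioo, smul_eq_mul,
      toReal_ofReal (by linarith : (0:ℝ) ≤ m - t)] at hle
  have step2 : (∫ s in Ioo t m, g s) ≤ ∫ s in Ioo t 1, g s := by
    refine setIntegral_mono_set hint1 ?_ (HasSubset.Subset.eventuallyLE hsub2)
    filter_upwards [ae_restrict_mem measurableSet_Ioo] with s hs
    exact (hpos s (hsub1 hs)).le
  have : 0 < (m - t) * g m := mul_pos (by linarith) (hpos m hmmem)
  linarith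

lemma int_split (hint : IntegrableOn g (Ioo 0 1)) {t : ℝ} (ht : t ∈ Ioo (0:ℝ) 1) :
    (∫ s in Ioo (0:ℝ) 1, g s) = (∫ s in Ioo (0:ℝ) t, g s) + ∫ s in Ioo t 1, g s := by
  have hsub1 : Ioo (0:ℝ) t ⊆ Ioo 0 1 := Ioo_subset_Ioo le_rfl ht.2.le
  have hsub2 : Ico t (1:ℝ) ⊆ Ioo 0 1 := fun s hs => ⟨lt_of_lt_of_le ht.1 hs.1, hs.2⟩
  have hunion : Ioo (0:ℝ) 1 = Ioo 0 t ∪ Ico t 1 := by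
    ext s
    simp only [mem_Ioo, mem_union, mem_Ico]
    constructor
    · rintro ⟨h1, h2⟩
      rcases lt_or_ge s t with h | h
      · exact Or.inl ⟨h1, h⟩
      · exact Or.inr ⟨h, h2⟩
    · rintro (⟨h1, h2⟩ | ⟨h1, h2⟩)
      · exact ⟨h1, lt_trans h2 ht.2⟩
      · exact ⟨lt_of_lt_of_le ht.1 h1, h2⟩
  rw [hunion, setIntegral_union (by simp [Set.disjoint_left, mem_Ioo, mem_Ico]; intro a h1 h2 h3; linarith) measurableSet_Ico
    (hint.mono_set (hunion ▸ hsub1)) (hint.mono_set (hunion ▸ hsub2)),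
    integral_Ico_eq_integral_Ioo]

end IntLemmas

section Karamata
variable {p : ℝ} {b1 b2 : ℝ → ℝ}

lemma karamata_pt (hp : 0 < p) (hb1 : SlowlyVarying b1) (hb2 : SlowlyVarying b2) :
    ∃ K : ℝ, 0 < K ∧ ∀ t ∈ Ioo (0:ℝ) 1, ∀ s ∈ Ioo (0:ℝ) 1, s ≤ t →
      (b1 s / b2 s) ^ p ≤ K * (t / s) ^ ((1:ℝ)/2) * (b1 t / b2 t) ^ p := by
  set ε : ℝ := 1 / (4 * p) with hεdef
  have hε : 0 < ε := by positivity
  obtain ⟨⟨be, hbemono, c₁, C₁, hc₁, hC₁, hbe⟩, -⟩ := hb1.2.2 ε hε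
  obtain ⟨-, ⟨bm, hbmanti, c₂, C₂, hc₂, hC₂, hbm⟩⟩ := hb2.2.2 ε hε
  refine ⟨((C₁/c₁)*(C₂/c₂)) ^ p, by positivity, ?_⟩
  intro t ht s hs hst
  have hspos := hs.1
  have htpos := ht.1
  have hb1s := hb1.2.1 s hs
  have hb1t := hb1.2.1 t ht
  have hb2s := hb2.2.1 s hs
  have hb2t := hb2.2.1 t ht
  have hsε : (0:ℝ) < s ^ ε := Real.rpow_pos_of_pos hspos ε
  have htε : (0:ℝ) < t ^ ε := Real.rpow_pos_of_pos htpos ε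
  have hsne := hsε.ne'
  have htne := htε.ne'
  -- bound for b1
  have hA : b1 s ≤ (C₁/c₁) * (t/s) ^ ε * b1 t := by
    have e1 : s ^ ε * b1 s ≤ C₁ * be s := (hbe s hs).2
    have e2 : be s ≤ be t := hbemono hs ht hst
    have e3 : c₁ * be t ≤ t ^ ε * b1 t := (hbe t ht).1
    have e4 : s ^ ε * b1 s ≤ (C₁/c₁) * (t ^ ε * b1 t) := by
      calc s ^ ε * b1 s ≤ C₁ * be s := e1
        _ ≤ C₁ * be t := by nlinarith
        _ = (C₁/c₁) * (c₁ * be t) := by field_simp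
        _ ≤ (C₁/c₁) * (t ^ ε * b1 t) := mul_le_mul_of_nonneg_left e3 (by positivity)
    have hdiv : (t/s) ^ ε = t ^ ε / s ^ ε := Real.div_rpow htpos.le hspos.le ε
    rw [hdiv, ← mul_le_mul_iff_left₀ hsε]
    calc b1 s * s ^ ε = s ^ ε * b1 s := mul_comm _ _
      _ ≤ (C₁/c₁) * (t ^ ε * b1 t) := e4
      _ = C₁/c₁ * (t ^ ε / s ^ ε) * b1 t * s ^ ε := by field_simp
  -- bound for b2
  have hB : (c₂/C₂) * (s/t) ^ ε * b2 t ≤ b2 s := by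
    have e1 : c₂ * bm s ≤ s ^ (-ε) * b2 s := (hbm s hs).1
    have e2 : bm t ≤ bm s := hbmanti hs ht hst
    have e3 : t ^ (-ε) * b2 t ≤ C₂ * bm t := (hbm t ht).2
    have e4 : (c₂/C₂) * ((t ^ ε)⁻¹ * b2 t) ≤ (s ^ ε)⁻¹ * b2 s := by
      rw [← Real.rpow_neg htpos.le, ← Real.rpow_neg hspos.le]
      calc (c₂/C₂) * (t ^ (-ε) * b2 t) ≤ (c₂/C₂) * (C₂ * bm t) :=
            mul_le_mul_of_nonneg_left e3 (by positivity)
        _ = c₂ * bm t := by field_simp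
        _ ≤ c₂ * bm s := by nlinarith
        _ ≤ s ^ (-ε) * b2 s := e1
    have hdiv : (s/t) ^ ε = s ^ ε / t ^ ε := Real.div_rpow hspos.le htpos.le ε
    have e5 := mul_le_mul_of_nonneg_right e4 (mul_pos hsε htε).le
    rw [hdiv, ← mul_le_mul_iff_left₀ htε]
    calc c₂/C₂ * (s ^ ε / t ^ ε) * b2 t * t ^ ε
        = (c₂/C₂) * ((t ^ ε)⁻¹ * b2 t) * (s ^ ε * t ^ ε) := by field_simp
      _ ≤ (s ^ ε)⁻¹ * b2 s * (s ^ ε * t ^ ε) := e5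
      _ = b2 s * t ^ ε := by field_simp
  -- combine
  have hts : (0:ℝ) < t / s := by positivity
  have hb2s' : (0:ℝ) < (c₂/C₂) * (s/t) ^ ε * b2 t := by
    have : (0:ℝ) < (s/t) ^ ε := Real.rpow_pos_of_pos (by positivity) ε
    positivity
  have hratio : b1 s / b2 s ≤ ((C₁/c₁) * (C₂/c₂)) * (t/s) ^ (2*ε) * (b1 t / b2 t) := by
    have h1 : b1 s / b2 s ≤ ((C₁/c₁) * (t/s) ^ ε * b1 t) / ((c₂/C₂) * (s/t) ^ ε * b2 t) :=
      div_le_div₀ (by positivity) hA hb2s' hB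
    refine h1.trans (le_of_eq ?_)
    have hst' : (s/t) ^ ε = ((t/s) ^ ε)⁻¹ := by
      rw [← inv_div t s, Real.inv_rpow hts.le]
    have h2 : (t/s) ^ (2*ε) = (t/s) ^ ε * (t/s) ^ ε := by
      rw [two_mul, Real.rpow_add hts]
    rw [hst', h2]
    have hApos : (0:ℝ) < (t/s) ^ ε := Real.rpow_pos_of_pos hts ε
    have hAne := hApos.ne'
    field_simp
  have hEP : 2 * ε * p = 1/2 := by
    rw [hεdef]; field_simp; ring
  have hKnn : (0:ℝ) ≤ (C₁/c₁) * (C₂/c₂) := by positivity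
  have h2ε : (0:ℝ) < (t/s) ^ (2*ε) := Real.rpow_pos_of_pos hts _
  have hfinal := Real.rpow_le_rpow (by positivity) hratio hp.le
  have key : (((C₁/c₁) * (C₂/c₂)) * (t/s) ^ (2*ε) * (b1 t / b2 t)) ^ p
      = ((C₁/c₁)*(C₂/c₂)) ^ p * (t/s) ^ ((1:ℝ)/2) * (b1 t / b2 t) ^ p := by
    rw [Real.mul_rpow (by positivity) (by positivity), Real.mul_rpow hKnn h2ε.le,
      ← Real.rpow_mul hts.le, hEP]
  rw [key] at hfinal
  exact hfinal

lemma karamata_int (hp : 0 < p) (hb1 : SlowlyVarying b1) (hb2 : SlowlyVarying b2)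
    (hint : IntegrableOn (fun s => (b1 s / b2 s) ^ p) (Ioo 0 1)) :
    ∃ B : ℝ, 0 < B ∧ ∀ t ∈ Ioo (0:ℝ) 1,
      (∫ s in Ioo (0:ℝ) t, (b1 s / b2 s) ^ p) ≤ B * (t * (b1 t / b2 t) ^ p) := by
  obtain ⟨K, hK, hpt⟩ := karamata_pt hp hb1 hb2
  refine ⟨2 * K, by positivity, ?_⟩
  intro t ht
  have htpos := ht.1
  set c0 : ℝ := K * (b1 t / b2 t) ^ p * t ^ ((1:ℝ)/2) with hc0
  have hsub : Ioo (0:ℝ) t ⊆ Ioo 0 1 := Ioo_subset_Ioo le_rfl ht.2.le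
  have hi2 : IntegrableOn (fun s : ℝ => s ^ (-(1/2):ℝ)) (Ioo 0 t) volume :=
    ((intervalIntegral.intervalIntegrable_rpow' (by norm_num : (-1:ℝ) < -(1/2))).1).mono_set
      Ioo_subset_Ioc_self
  have hgt : (0:ℝ) < (b1 t / b2 t) ^ p :=
    Real.rpow_pos_of_pos (div_pos (hb1.2.1 t ht) (hb2.2.1 t ht)) p
  have hcomp : (∫ s in Ioo (0:ℝ) t, (b1 s / b2 s) ^ p)
      ≤ ∫ s in Ioo (0:ℝ) t, c0 * s ^ (-(1/2):ℝ) := by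
    refine setIntegral_mono_on (hint.mono_set hsub) (hi2.const_mul c0) measurableSet_Ioo ?_
    intro s hs
    have hs1 : s ∈ Ioo (0:ℝ) 1 := hsub hs
    have h1 := hpt t ht s hs1 hs.2.le
    refine h1.trans (le_of_eq ?_)
    have hspos := hs.1
    have e1 : (t/s) ^ ((1:ℝ)/2) = t ^ ((1:ℝ)/2) / s ^ ((1:ℝ)/2) :=
      Real.div_rpow htpos.le hspos.le _
    have e2 : s ^ (-(1/2):ℝ) = (s ^ ((1/2):ℝ))⁻¹ := by
      rw [show (-(1/2):ℝ) = -(1/2) from rfl, Real.rpow_neg hspos.le]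
    rw [hc0, e1, e2]
    have := (Real.rpow_pos_of_pos hspos ((1:ℝ)/2)).ne'
    field_simp
  have hval : (∫ s in Ioo (0:ℝ) t, s ^ (-(1/2):ℝ)) = 2 * t ^ ((1:ℝ)/2) := by
    rw [← integral_Ioc_eq_integral_Ioo, ← _root_.intervalIntegral.integral_of_le htpos.le,
      integral_rpow (Or.inl (by norm_num))]
    rw [Real.zero_rpow (by norm_num : (-(1/2):ℝ) + 1 ≠ 0)]
    have : (-(1/2):ℝ) + 1 = 1/2 := by norm_num
    rw [this]
    ring
  have hmul : (∫ s in Ioo (0:ℝ) t, c0 * s ^ (-(1/2):ℝ)) = c0 * (2 * t ^ ((1:ℝ)/2)) := by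
    rw [integral_const_mul, hval]
  have hhalf : t ^ ((1:ℝ)/2) * t ^ ((1:ℝ)/2) = t := by
    rw [← Real.rpow_add htpos]; norm_num
  calc (∫ s in Ioo (0:ℝ) t, (b1 s / b2 s) ^ p) ≤ c0 * (2 * t ^ ((1:ℝ)/2)) := hcomp.trans hmul.le
    _ = 2 * K * (t * (b1 t / b2 t) ^ p) := by rw [hc0]; linear_combination (2*K*(b1 t / b2 t)^p) * hhalf

end Karamata
section Phi
variable {p : ℝ} {b1 b2 σ σi : ℝ → ℝ}

lemma phi_eq (hp : 0 < p) (hσ : IsSigma p b1 b2 σ) (hσi : IsSigmaInv σ σi)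
    {t : ℝ} (ht : t ∈ Ioo (0:ℝ) 1) :
    σi (t ^ (1/p)) ^ p = (∫ s in Ioo (0:ℝ) 1, (b1 s / b2 s) ^ p)⁻¹ *
      ∫ s in Ioo (0:ℝ) t, (b1 s / b2 s) ^ p := by
  have hr : t ^ (1/p) ∈ Icc (0:ℝ) 1 :=
    ⟨Real.rpow_nonneg ht.1.le _, Real.rpow_le_one ht.1.le ht.2.le (by positivity)⟩
  have hs0 : σi (t ^ (1/p)) ∈ Icc (0:ℝ) 1 := hσi.1 hr
  have h := hσ.2.2.2.2.2.2 _ hs0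
  rw [(hσi.2 _ hr).1, my_rpow_inv_rpow ht.1.le hp.ne'] at h
  exact h

lemma phi_prop (hp : 0 < p) (hσ : IsSigma p b1 b2 σ) (hσi : IsSigmaInv σ σi)
    (hganti : AntitoneOn (fun s => (b1 s / b2 s) ^ p) (Ioo (0:ℝ) 1))
    (hgpos : ∀ s ∈ Ioo (0:ℝ) 1, 0 < (b1 s / b2 s) ^ p)
    {t : ℝ} (ht : t ∈ Ioo (0:ℝ) 1) :
    t ≤ σi (t ^ (1/p)) ^ p ∧ σi (t ^ (1/p)) ^ p < 1 := by
  have hgint := hσ.2.2.2.2.1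
  have hDpos := hσ.2.2.2.2.2.1
  have he := phi_eq hp hσ hσi ht
  have hF1 := int_lower hgint hganti ht
  have hFup := int_upper hgint hganti ht
  have hsplit := int_split hgint ht
  have hpos2 := int_pos_right hgint hganti hgpos ht
  have hgt := hgpos t ht
  have ht1 := ht.1
  have ht2 := ht.2
  constructor
  · rw [he, inv_mul_eq_div, le_div_iff₀ hDpos]
    nlinarith [mul_le_mul_of_nonneg_left hFup ht.1.le,
      mul_le_mul_of_nonneg_left hF1 (by linarith : (0:ℝ) ≤ 1 - t)]
  · rw [he, inv_mul_eq_div, div_lt_one hDpos]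
    linarith

end Phi

lemma small_delta {g : ℝ → ℝ} (hgint : IntegrableOn g (Ioo 0 1)) {δ : ℝ}
    (hδ : δ ∈ Ioo (0:ℝ) 1) :
    ∃ δ₁ : ℝ, δ₁ ∈ Ioo (0:ℝ) 1 ∧ δ₁ ≤ δ ∧ (∫ s in Ioo (0:ℝ) δ₁, g s) ≤ 1/2 := by
  have hδpos := hδ.1
  have hanti : Antitone (fun n : ℕ => Ioo (0:ℝ) (δ/(n+1))) := by
    intro m n hmn
    apply Ioo_subset_Ioo le_rfl
    have hc : ((m:ℝ)+1) ≤ (n:ℝ)+1 := by exact_mod_cast Nat.succ_le_succ hmn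
    gcongr
  have hinter : (⋂ n : ℕ, Ioo (0:ℝ) (δ/(n+1))) = ∅ := by
    ext x
    simp only [mem_iInter, mem_Ioo, mem_empty_iff_false, iff_false, not_forall]
    by_contra hcon
    push_neg at hcon
    have hx := (hcon 0).1
    obtain ⟨n, hn⟩ := exists_nat_gt (δ/x)
    have h2 := (hcon n).2
    have hnn : (0:ℝ) < (n:ℝ) + 1 := by positivity
    have : δ < x * ((n:ℝ)+1) := by
      have := (div_lt_iff₀ hx).1 (lt_trans hn (by linarith : (n:ℝ) < n+1))
      linarith [this]
    have : δ/((n:ℝ)+1) < x := by rw [div_lt_iff₀ hnn]; linarith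
    linarith
  have hsub0 : Ioo (0:ℝ) (δ/((0:ℕ)+1)) ⊆ Ioo 0 1 := by
    norm_num
    exact Ioo_subset_Ioo le_rfl hδ.2.le
  have h0 := tendsto_setIntegral_of_antitone (fun n => measurableSet_Ioo) hanti
    ⟨0, hgint.mono_set hsub0⟩
  rw [hinter] at h0
  simp only [Measure.restrict_empty, integral_zero_measure] at h0
  have hev := h0.eventually_lt_const (by norm_num : (0:ℝ) < 1/2)
  obtain ⟨n, hn⟩ := hev.exists
  refine ⟨δ/((n:ℝ)+1), ⟨by positivity, ?_⟩, ?_, hn.le⟩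
  · calc δ/((n:ℝ)+1) ≤ δ := div_le_self hδpos.le (by norm_num)
      _ < 1 := hδ.2
  · exact div_le_self hδpos.le (by norm_num)

section Main
variable {p : ℝ} {b1 b2 σ σi : ℝ → ℝ}

lemma g_anti (hp : 0 < p) (hb1 : SlowlyVarying b1) (hb2 : SlowlyVarying b2)
    (hb1anti : AntitoneOn b1 (Ioo (0:ℝ) 1)) (hb2mono : MonotoneOn b2 (Ioo (0:ℝ) 1)) :
    AntitoneOn (fun s => (b1 s / b2 s) ^ p) (Ioo (0:ℝ) 1) := by
  intro s hs u hu hsu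
  have h1 : b1 u / b2 u ≤ b1 s / b2 s :=
    div_le_div₀ (hb1.2.1 s hs).le (hb1anti hs hu hsu) (hb2.2.1 s hs) (hb2mono hs hu hsu)
  exact Real.rpow_le_rpow (div_nonneg (hb1.2.1 u hu).le (hb2.2.1 u hu).le) h1 hp.le

lemma g_pos (hb1 : SlowlyVarying b1) (hb2 : SlowlyVarying b2) :
    ∀ s ∈ Ioo (0:ℝ) 1, 0 < (b1 s / b2 s) ^ p := fun s hs =>
  Real.rpow_pos_of_pos (div_pos (hb1.2.1 s hs) (hb2.2.1 s hs)) _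

lemma main_L2 (hp : 0 < p) (hb1 : SlowlyVarying b1) (hb2 : SlowlyVarying b2)
    (hb1anti : AntitoneOn b1 (Ioo (0:ℝ) 1)) (hb2mono : MonotoneOn b2 (Ioo (0:ℝ) 1))
    (hhyp : ∃ δ ∈ Ioo (0:ℝ) 1, EquivOn b1 (fun t => b1 (t * (b1 t / b2 t) ^ p)) (Ioo 0 δ))
    (hσ : IsSigma p b1 b2 σ) (hσi : IsSigmaInv σ σi) :
    ∃ K : ℝ, 1 ≤ K ∧ ∀ t ∈ Ioo (0:ℝ) 1, b1 t ≤ K * b1 (σi (t ^ (1/p)) ^ p) := by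
  obtain ⟨δ, hδ, c₀, C₀, hc₀, hC₀, heq⟩ := hhyp
  obtain ⟨k, hk, hrat⟩ := slow_ratio hb1
  have hgint := hσ.2.2.2.2.1
  have hDpos := hσ.2.2.2.2.2.1
  obtain ⟨B, hBpos, hkar⟩ := karamata_int hp hb1 hb2 hgint
  obtain ⟨δ₁, hδ₁, hδ₁δ, hF₁⟩ := small_delta hgint hδ
  have hganti := g_anti hp hb1 hb2 hb1anti hb2mono
  have hgpos := g_pos (p := p) hb1 hb2
  set D : ℝ := ∫ s in Ioo (0:ℝ) 1, (b1 s / b2 s) ^ p with hD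
  set M₀ : ℝ := max (B/D) 1 with hM₀
  have hM₀1 : (1:ℝ) ≤ M₀ := le_max_right _ _
  set K : ℝ := max (C₀ * max (M₀/k) 1) (max (1/(k*δ₁)) 1) with hK
  have hK1 : (1:ℝ) ≤ K := le_trans (le_max_right _ _) (le_max_right _ _)
  refine ⟨K, hK1, ?_⟩
  intro t ht
  have hφeq := phi_eq hp hσ hσi ht
  obtain ⟨hφge, hφlt⟩ := phi_prop hp hσ hσi hganti hgpos ht
  set φt : ℝ := σi (t ^ (1/p)) ^ p with hφt
  have hφIoo : φt ∈ Ioo (0:ℝ) 1 := ⟨lt_of_lt_of_le ht.1 hφge, hφlt⟩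
  have hb1φnn : 0 ≤ b1 φt := (hb1.2.1 _ hφIoo).le
  rcases lt_or_ge t δ₁ with hcase | hcase
  · -- small t
    set x : ℝ := t * (b1 t / b2 t) ^ p with hx
    have hxpos : 0 < x := mul_pos ht.1 (hgpos t ht)
    have hxle : x ≤ ∫ s in Ioo (0:ℝ) t, (b1 s / b2 s) ^ p := int_lower hgint hganti ht
    have hsub1 : Ioo (0:ℝ) δ₁ ⊆ Ioo 0 1 := Ioo_subset_Ioo le_rfl hδ₁.2.le
    have hFmono : (∫ s in Ioo (0:ℝ) t, (b1 s / b2 s) ^ p)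
        ≤ ∫ s in Ioo (0:ℝ) δ₁, (b1 s / b2 s) ^ p := by
      refine setIntegral_mono_set (hgint.mono_set hsub1) ?_
        (HasSubset.Subset.eventuallyLE (Ioo_subset_Ioo le_rfl hcase.le))
      filter_upwards [ae_restrict_mem measurableSet_Ioo] with s hs
      exact (hgpos s (hsub1 hs)).le
    have hxmem : x ∈ Ioo (0:ℝ) 1 := ⟨hxpos, by linarith⟩
    have hb1t : b1 t ≤ C₀ * b1 x := (heq t ⟨ht.1, lt_of_lt_of_le hcase hδ₁δ⟩).2
    have hφub : φt ≤ (B/D) * x := by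
      rw [hφeq]
      calc D⁻¹ * ∫ s in Ioo (0:ℝ) t, (b1 s / b2 s) ^ p
          ≤ D⁻¹ * (B * x) := mul_le_mul_of_nonneg_left (hkar t ht) (inv_nonneg.2 hDpos.le)
        _ = B/D * x := by ring
    have hb1x : b1 x ≤ max (M₀/k) 1 * b1 φt := by
      rcases le_or_gt x φt with h | h
      · have hub : φt ≤ M₀ * x :=
          hφub.trans (mul_le_mul_of_nonneg_right (le_max_left _ _) hxpos.le)
        have hr := hrat M₀ hM₀1 x hxmem φt hφIoo h hub
        have hkM : (0:ℝ) < k/M₀ := div_pos hk (lt_of_lt_of_le one_pos hM₀1)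
        have h2 : b1 x ≤ M₀/k * b1 φt := by
          calc b1 x = (M₀/k) * (k/M₀ * b1 x) := by
                rw [← inv_div k M₀]; exact (inv_mul_cancel_left₀ hkM.ne' _).symm
            _ ≤ (M₀/k) * b1 φt := mul_le_mul_of_nonneg_left hr (by positivity)
        exact h2.trans (mul_le_mul_of_nonneg_right (le_max_left _ _) hb1φnn)
      · have h2 : b1 x ≤ b1 φt := hb1anti hφIoo hxmem h.le
        exact h2.trans (le_mul_of_one_le_left hb1φnn (le_max_right _ _))
    calc b1 t ≤ C₀ * b1 x := hb1t
      _ ≤ C₀ * (max (M₀/k) 1 * b1 φt) := mul_le_mul_of_nonneg_left hb1x hC₀.le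
      _ = (C₀ * max (M₀/k) 1) * b1 φt := by ring
      _ ≤ K * b1 φt := mul_le_mul_of_nonneg_right (le_max_left _ _) hb1φnn
  · -- large t
    have hub : φt ≤ (1/δ₁) * t := by
      rw [one_div, inv_mul_eq_div, le_div_iff₀ hδ₁.1]
      nlinarith [hφlt, hδ₁.1, hδ₁.2, hcase, hφIoo.1]
    have hM : (1:ℝ) ≤ 1/δ₁ := by
      rw [le_div_iff₀ hδ₁.1, one_mul]; exact hδ₁.2.le
    have hr := hrat (1/δ₁) hM t ht φt hφIoo hφge hub
    have hsim : k/(1/δ₁) = k*δ₁ := by field_simp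
    rw [hsim] at hr
    have hkδ : (0:ℝ) < k*δ₁ := mul_pos hk hδ₁.1
    have hb1tle : b1 t ≤ (1/(k*δ₁)) * b1 φt := by
      calc b1 t = (1/(k*δ₁)) * (k*δ₁ * b1 t) := by
            rw [one_div]; exact (inv_mul_cancel_left₀ hkδ.ne' _).symm
        _ ≤ (1/(k*δ₁)) * b1 φt := mul_le_mul_of_nonneg_left hr (by positivity)
    refine hb1tle.trans (mul_le_mul_of_nonneg_right ?_ hb1φnn)
    exact le_trans (le_max_left _ _) (le_max_right _ _)

end Main

theorem stmt_11 (p : ℝ) (hp : 0 < p) (b1 b2 σ σi : ℝ → ℝ)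
    (hB : InBp p b1 b2) (hσ : IsSigma p b1 b2 σ) (hσi : IsSigmaInv σ σi) :
    ∃ c C : ℝ, 0 < c ∧ 0 < C ∧ ∀ t ∈ Ioo (0:ℝ) 1,
      (c * b1 ((σi (t ^ (1/p))) ^ p) ≤ b1 t ∧ b1 t ≤ C * b1 ((σi (t ^ (1/p))) ^ p)) ∧
      (c * b1 ((σ (t ^ (1/p))) ^ p) ≤ b1 t ∧ b1 t ≤ C * b1 ((σ (t ^ (1/p))) ^ p)) := by
  obtain ⟨hb1sv, hb2sv, -, -, hb1anti, hb2mono, hhyp, -⟩ := hB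
  obtain ⟨K, hK1, hL2⟩ := main_L2 hp hb1sv hb2sv hb1anti hb2mono hhyp hσ hσi
  have hKpos : (0:ℝ) < K := lt_of_lt_of_le one_pos hK1
  refine ⟨K⁻¹, K, inv_pos.2 hKpos, hKpos, ?_⟩
  intro t ht
  have hganti := g_anti hp hb1sv hb2sv hb1anti hb2mono
  have hgpos := g_pos (p := p) hb1sv hb2sv
  obtain ⟨hφge, hφlt⟩ := phi_prop hp hσ hσi hganti hgpos ht
  have hφIoo : σi (t ^ (1/p)) ^ p ∈ Ioo (0:ℝ) 1 := ⟨lt_of_lt_of_le ht.1 hφge, hφlt⟩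
  have hb1φnn : 0 ≤ b1 (σi (t ^ (1/p)) ^ p) := (hb1sv.2.1 _ hφIoo).le
  refine ⟨⟨?_, hL2 t ht⟩, ?_⟩
  · have h1 : b1 (σi (t ^ (1/p)) ^ p) ≤ b1 t := hb1anti ht hφIoo hφge
    have h2 : K⁻¹ ≤ 1 := inv_le_one_of_one_le₀ hK1
    nlinarith
  · have hr : t ^ (1/p) ∈ Ioo (0:ℝ) 1 :=
      ⟨Real.rpow_pos_of_pos ht.1 _, Real.rpow_lt_one ht.1.le ht.2 (by positivity)⟩
    have hrIcc : t ^ (1/p) ∈ Icc (0:ℝ) 1 := ⟨hr.1.le, hr.2.le⟩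
    have h0m : (0:ℝ) ∈ Icc (0:ℝ) 1 := ⟨le_rfl, zero_le_one⟩
    have h1m : (1:ℝ) ∈ Icc (0:ℝ) 1 := ⟨zero_le_one, le_rfl⟩
    have hσr : σ (t ^ (1/p)) ∈ Ioo (0:ℝ) 1 := by
      constructor
      · have := hσ.1 h0m hrIcc hr.1; rwa [hσ.2.2.1] at this
      · have := hσ.1 hrIcc h1m hr.2; rwa [hσ.2.2.2.1] at this
    have humem : (σ (t ^ (1/p))) ^ p ∈ Ioo (0:ℝ) 1 :=
      ⟨Real.rpow_pos_of_pos hσr.1 _, Real.rpow_lt_one hσr.1.le hσr.2 hp⟩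
    have hphiu : σi (((σ (t ^ (1/p))) ^ p) ^ (1/p)) ^ p = t := by
      rw [my_rpow_rpow_inv hσr.1.le hp.ne', (hσi.2 _ hrIcc).2,
        my_rpow_inv_rpow ht.1.le hp.ne']
    have hL2u := hL2 _ humem
    rw [hphiu] at hL2u
    have hL1u := (phi_prop hp hσ hσi hganti hgpos humem).1
    rw [hphiu] at hL1u
    constructor
    · have := mul_le_mul_of_nonneg_left hL2u (inv_nonneg.2 hKpos.le)
      rwa [inv_mul_cancel_left₀ hKpos.ne'] at this
    · have h1 : b1 t ≤ b1 ((σ (t ^ (1/p))) ^ p) := hb1anti humem ht hL1u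
      have hnn : 0 ≤ b1 ((σ (t ^ (1/p))) ^ p) := (hb1sv.2.1 _ humem).le
      nlinarith
end

section
/- Let p ∈ (0,∞), (b_1, b_2) ∈ B_p, with t ↦ b_1(t)/b_2(t) strictly decreasing and lim_{s→0^+} b_2(s)^p ∫_s^1 dτ/(τ b_1(τ)^p) ∈ (0,∞). Then s · ∫_s^1 dτ/(τ b_1(τ)^p) ≲ ∫_s^{σ^{-1}(s^{1/p})^p} dτ / b_1(σ(τ^{1/p})^p)^p for every s ∈ (0,1). -/
open MeasureTheory Set ENNReal Filter Topology

set_option maxHeartbeats 1600000 in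
theorem stmt_14 (p : ℝ) (hp : 0 < p) (b1 b2 σ σi : ℝ → ℝ)
    (hB : InBp p b1 b2) (hσ : IsSigma p b1 b2 σ) (hσi : IsSigmaInv σ σi)
    (hsd : StrictAntiOn (fun t => b1 t / b2 t) (Ioo (0:ℝ) 1))
    (L : ℝ) (hL : 0 < L)
    (hlim : Tendsto (fun s => b2 s ^ p * ∫ τ in Ioo s 1, 1 / (τ * b1 τ ^ p))
      (𝓝[>] (0:ℝ)) (𝓝 L)) :
    ∃ C : ℝ, 0 < C ∧ ∀ s ∈ Ioo (0:ℝ) 1,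
      s * (∫ τ in Ioo s 1, 1 / (τ * b1 τ ^ p)) ≤
        C * ∫ τ in Ioo s ((σi (s ^ (1/p))) ^ p), 1 / (b1 ((σ (τ ^ (1/p))) ^ p)) ^ p := by  classical
  obtain ⟨hsv1, hsv2, hc1, hc2, ha1, hm2, hrat, M, hM⟩ := hB
  obtain ⟨hσmono, hσimg, hσ0, hσ1, hφint, hC0pos, hσrel⟩ := hσ
  obtain ⟨hσimap, hσinv⟩ := hσi
  have hb1pos : ∀ t ∈ Ioo (0:ℝ) 1, 0 < b1 t := hsv1.2.1
  have hb2pos : ∀ t ∈ Ioo (0:ℝ) 1, 0 < b2 t := hsv2.2.1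
  have hpne : p ≠ 0 := ne_of_gt hp
  have hpinv : 0 < 1/p := by positivity
  set φ : ℝ → ℝ := fun u => (b1 u / b2 u) ^ p with hφdef
  set C0 : ℝ := ∫ s in Ioo (0:ℝ) 1, φ s with hC0def
  have hφpos : ∀ t ∈ Ioo (0:ℝ) 1, 0 < φ t := fun t ht =>
    Real.rpow_pos_of_pos (div_pos (hb1pos t ht) (hb2pos t ht)) p
  have hφanti : ∀ u ∈ Ioo (0:ℝ) 1, ∀ v ∈ Ioo (0:ℝ) 1, u ≤ v → φ v ≤ φ u := by
    intro u hu v hv huv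
    rcases eq_or_lt_of_le huv with rfl | hlt
    · exact le_refl _
    · exact Real.rpow_le_rpow (le_of_lt (div_pos (hb1pos v hv) (hb2pos v hv)))
        (le_of_lt (hsd hu hv hlt)) hp.le
  have hφstrict : ∀ u ∈ Ioo (0:ℝ) 1, ∀ v ∈ Ioo (0:ℝ) 1, u < v → φ v < φ u := by
    intro u hu v hv huv
    exact Real.rpow_lt_rpow (le_of_lt (div_pos (hb1pos v hv) (hb2pos v hv)))
      (hsd hu hv huv) hp
  set J : ℝ → ℝ → ℝ := fun a b => ∫ u in Ioo a b, φ u with hJdef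
  have hφint' : IntegrableOn φ (Ioo (0:ℝ) 1) := hφint
  have hφsub : ∀ a b : ℝ, 0 ≤ a → b ≤ 1 → IntegrableOn φ (Ioo a b) := by
    intro a b ha hb
    exact hφint'.mono_set (by
      intro x hx
      exact ⟨lt_of_le_of_lt ha hx.1, lt_of_lt_of_le hx.2 hb⟩)
  have hJadd : ∀ a b c : ℝ, 0 ≤ a → a ≤ b → b ≤ c → c ≤ 1 → J a c = J a b + J b c := by
    intro a b c ha hab hbc hc1
    have h1 : IntervalIntegrable φ volume a b := by
      rw [intervalIntegrable_iff_integrableOn_Ioo_of_le hab]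
      exact hφsub a b ha (le_trans hbc hc1)
    have h2 : IntervalIntegrable φ volume b c := by
      rw [intervalIntegrable_iff_integrableOn_Ioo_of_le hbc]
      exact hφsub b c (le_trans ha hab) hc1
    have e : ∀ x y : ℝ, x ≤ y → (∫ u in Ioo x y, φ u) = ∫ u in x..y, φ u := by
      intro x y hxy
      rw [intervalIntegral.integral_of_le hxy, integral_Ioc_eq_integral_Ioo]
    simp only [hJdef]
    rw [e a c (le_trans hab hbc), e a b hab, e b c hbc,
      intervalIntegral.integral_add_adjacent_intervals h1 h2]
  have hJnonneg : ∀ a b : ℝ, 0 ≤ a → b ≤ 1 → 0 ≤ J a b := by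
    intro a b ha hb
    refine setIntegral_nonneg measurableSet_Ioo (fun x hx => ?_)
    exact (hφpos x ⟨lt_of_le_of_lt ha hx.1, lt_of_lt_of_le hx.2 hb⟩).le
  -- constant lower/upper bounds on J
  have hJge : ∀ a b : ℝ, 0 ≤ a → a ≤ b → b ≤ 1 → ∀ m ∈ Ioo (0:ℝ) 1,
      (∀ x ∈ Ioo a b, φ m ≤ φ x) → φ m * (b - a) ≤ J a b := by
    intro a b ha hab hb m hm hcomp
    have := setIntegral_ge_of_const_le (μ := volume) measurableSet_Ioo
      (by simp [Real.volume_Ioo]) hcomp (hφsub a b ha hb)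
    rw [Real.volume_real_Ioo_of_le hab, smul_eq_mul, mul_comm] at this
    exact this
  have hJle : ∀ a b : ℝ, 0 ≤ a → a ≤ b → b ≤ 1 → ∀ m ∈ Ioo (0:ℝ) 1,
      (∀ x ∈ Ioo a b, φ x ≤ φ m) → J a b ≤ φ m * (b - a) := by
    intro a b ha hab hb m hm hcomp
    have := setIntegral_mono_on (μ := volume) (hφsub a b ha hb)
      (integrableOn_const (by simp [Real.volume_Ioo])) measurableSet_Ioo hcomp
    rw [setIntegral_const, Real.volume_real_Ioo_of_le hab,
      smul_eq_mul] at this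
    linarith [this]
  -- strict bound: C0 * d < J 0 d for all d ∈ (0,1)
  have hψpos : ∀ d ∈ Ioo (0:ℝ) 1, C0 * d < J 0 d := by
    intro d hd
    obtain ⟨hd0, hd1⟩ := hd
    set m : ℝ := (1 + d) / 2 with hm
    have hdm : d < m := by rw [hm]; linarith
    have hm1 : m < 1 := by rw [hm]; linarith
    have hmI : m ∈ Ioo (0:ℝ) 1 := ⟨by linarith, hm1⟩
    have hsplit : C0 = J 0 d + (J d m + J m 1) := by
      have h1 : J 0 1 = J 0 d + J d 1 := hJadd 0 d 1 le_rfl hd0.le hd1.le le_rfl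
      have h2 : J d 1 = J d m + J m 1 := hJadd d m 1 hd0.le hdm.le hm1.le le_rfl
      have h3 : C0 = J 0 1 := by simp [hJdef, hC0def]
      rw [h3, h1, h2]
    have hJ1 : J d m ≤ φ d * (m - d) := by
      refine hJle d m hd0.le hdm.le hm1.le d ⟨hd0, hd1⟩ (fun x hx => ?_)
      exact hφanti d ⟨hd0, hd1⟩ x ⟨lt_trans hd0 hx.1, lt_trans hx.2 hm1⟩ hx.1.le
    have hJ2 : J m 1 ≤ φ m * (1 - m) := by
      refine hJle m 1 (by linarith) hm1.le le_rfl m hmI (fun x hx => ?_)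
      exact hφanti m hmI x ⟨lt_trans hmI.1 hx.1, hx.2⟩ hx.1.le
    have hφdm : φ m < φ d := hφstrict d ⟨hd0, hd1⟩ m hmI hdm
    have hJ0d : φ d * d ≤ J 0 d := by
      have := hJge 0 d le_rfl hd0.le hd1.le d ⟨hd0, hd1⟩ (fun x hx => ?_)
      · simpa using this
      · exact hφanti x ⟨hx.1, lt_trans hx.2 hd1⟩ d ⟨hd0, hd1⟩ hx.2.le
    have hφdpos : 0 < φ d := hφpos d ⟨hd0, hd1⟩
    have key : J d m + J m 1 < φ d * (1 - d) := by
      nlinarith [mul_pos (sub_pos.2 hφdm) (sub_pos.2 hm1)]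
    nlinarith [mul_lt_mul_of_pos_left key hd0,
      mul_le_mul_of_nonneg_left hJ0d (by linarith : (0:ℝ) ≤ 1 - d)]
  -- existence of a point where φ exceeds its mean
  have hx0 : ∃ x ∈ Ioo (0:ℝ) 1, C0 < φ x := by
    by_contra hcon
    push_neg at hcon
    have h2 : (0:ℝ) < 1/2 := by norm_num
    have hub : J 0 (1/2) ≤ C0 * (1/2) := by
      have := setIntegral_mono_on (μ := volume) (hφsub 0 (1/2) le_rfl (by norm_num))
        (integrableOn_const (by simp [Real.volume_Ioo])) measurableSet_Ioo
        (fun x hx => hcon x ⟨hx.1, by linarith [hx.2]⟩)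
      rw [setIntegral_const, Real.volume_real_Ioo_of_le (by norm_num),
        smul_eq_mul] at this
      calc J 0 (1/2) ≤ (1/2 - 0) * C0 := this
        _ = C0 * (1/2) := by ring
    have := hψpos (1/2) ⟨h2, by norm_num⟩
    linarith
  -- σ and g basics
  have hσmem : ∀ x ∈ Icc (0:ℝ) 1, σ x ∈ Icc (0:ℝ) 1 := by
    intro x hx
    have : σ x ∈ σ '' Icc (0:ℝ) 1 := mem_image_of_mem σ hx
    rwa [hσimg] at this
  have hrootmem : ∀ τ : ℝ, τ ∈ Icc (0:ℝ) 1 → τ ^ (1/p) ∈ Icc (0:ℝ) 1 := by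
    intro τ hτ
    exact ⟨Real.rpow_nonneg hτ.1 _, Real.rpow_le_one hτ.1 hτ.2 hpinv.le⟩
  set g : ℝ → ℝ := fun τ => (σ (τ ^ (1/p))) ^ p with hgdef
  have hgmem : ∀ τ ∈ Icc (0:ℝ) 1, g τ ∈ Icc (0:ℝ) 1 := by
    intro τ hτ
    have h1 := hσmem _ (hrootmem τ hτ)
    exact ⟨Real.rpow_nonneg h1.1 _, Real.rpow_le_one h1.1 h1.2 hp.le⟩
  have hgmono : ∀ τ1 ∈ Icc (0:ℝ) 1, ∀ τ2 ∈ Icc (0:ℝ) 1, τ1 ≤ τ2 → g τ1 ≤ g τ2 := by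
    intro τ1 h1 τ2 h2 hle
    have hr : τ1 ^ (1/p) ≤ τ2 ^ (1/p) := Real.rpow_le_rpow h1.1 hle hpinv.le
    have hσle : σ (τ1 ^ (1/p)) ≤ σ (τ2 ^ (1/p)) :=
      hσmono.monotoneOn (hrootmem τ1 h1) (hrootmem τ2 h2) hr
    exact Real.rpow_le_rpow (hσmem _ (hrootmem τ1 h1)).1 hσle hp.le
  have hrppow : ∀ u : ℝ, 0 ≤ u → (u ^ (1/p)) ^ p = u := by
    intro u hu
    rw [← Real.rpow_mul hu, one_div, inv_mul_cancel₀ hpne, Real.rpow_one]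
  have hgJ : ∀ s ∈ Icc (0:ℝ) 1, J 0 (g s) = C0 * s := by
    intro s hs
    have h1 := hσrel (s ^ (1/p)) (hrootmem s hs)
    rw [hrppow s hs.1] at h1
    have : J 0 (g s) = integral (volume.restrict (Ioo 0 (σ (s ^ (1/p)) ^ p))) φ := rfl
    field_simp at h1
    rw [this]
    linarith [h1]
  have hfval : ∀ u ∈ Icc (0:ℝ) 1, (σi (u ^ (1/p))) ^ p = C0⁻¹ * J 0 u := by
    intro u hu
    have hru := hrootmem u hu
    have ht : σi (u ^ (1/p)) ∈ Icc (0:ℝ) 1 := hσimap hru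
    have h1 := hσrel _ ht
    rw [(hσinv _ hru).1, hrppow u hu.1] at h1
    exact h1
  have hgf : ∀ u ∈ Icc (0:ℝ) 1, g ((σi (u ^ (1/p))) ^ p) = u := by
    intro u hu
    have hru := hrootmem u hu
    have ht : σi (u ^ (1/p)) ∈ Icc (0:ℝ) 1 := hσimap hru
    have h2 : ((σi (u ^ (1/p))) ^ p) ^ (1/p) = σi (u ^ (1/p)) := by
      rw [← Real.rpow_mul ht.1, mul_one_div, div_self hpne, Real.rpow_one]
    show (σ ((((σi (u ^ (1/p))) ^ p)) ^ (1/p))) ^ p = u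
    rw [h2, (hσinv _ hru).1, hrppow u hu.1]
  have hgIoo : ∀ s ∈ Ioo (0:ℝ) 1, g s ∈ Ioo (0:ℝ) 1 := by
    intro s hs
    have hsI : s ∈ Icc (0:ℝ) 1 := ⟨hs.1.le, hs.2.le⟩
    have hr0 : (0:ℝ) < s ^ (1/p) := Real.rpow_pos_of_pos hs.1 _
    have hr1 : s ^ (1/p) < 1 := Real.rpow_lt_one hs.1.le hs.2 hpinv
    have h0m : (0:ℝ) ∈ Icc (0:ℝ) 1 := by norm_num
    have h1m : (1:ℝ) ∈ Icc (0:ℝ) 1 := by norm_num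
    constructor
    · have : σ 0 < σ (s ^ (1/p)) := hσmono h0m (hrootmem s hsI) hr0
      rw [hσ0] at this
      exact Real.rpow_pos_of_pos this p
    · have : σ (s ^ (1/p)) < σ 1 := hσmono (hrootmem s hsI) h1m hr1
      rw [hσ1] at this
      exact Real.rpow_lt_one (hσmem _ (hrootmem s hsI)).1 this hp
  -- slow variation of b1 : comparison of values
  obtain ⟨be, hbemono, c, Cc, hcpos, hCcpos, hbe⟩ := (hsv1.2.2 1 one_pos).1
  have hbe' : ∀ t ∈ Ioo (0:ℝ) 1, c * be t ≤ t * b1 t ∧ t * b1 t ≤ Cc * be t := by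
    intro t ht
    have := hbe t ht
    simp only [Real.rpow_one] at this
    exact this
  have hsva : ∀ u ∈ Ioo (0:ℝ) 1, ∀ t ∈ Ioo (0:ℝ) 1, u ≤ t →
      (c / Cc) * (u * b1 u) ≤ t * b1 t := by
    intro u hu t ht hut
    have h1 := hbe' u hu
    have h2 := hbe' t ht
    have h3 : be u ≤ be t := hbemono hu ht hut
    have h4 : (c / Cc) * (u * b1 u) ≤ c * be u := by
      rw [div_mul_eq_mul_div, mul_comm c, mul_div_assoc]
      calc u * b1 u * (c / Cc) ≤ Cc * be u * (c / Cc) := by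
            apply mul_le_mul_of_nonneg_right h1.2
            positivity
        _ = c * be u := by field_simp
    calc (c / Cc) * (u * b1 u) ≤ c * be u := h4
      _ ≤ c * be t := by nlinarith
      _ ≤ t * b1 t := h2.1
  -- uniform positive lower bound for b1 on (0,1)
  set β : ℝ := min (b1 (1/2)) ((c / Cc) * ((1/2) * b1 (1/2))) with hβdef
  have hhalf : (1/2 : ℝ) ∈ Ioo (0:ℝ) 1 := by norm_num
  have hβpos : 0 < β := by
    have := hb1pos (1/2) hhalf
    apply lt_min this
    positivity
  have hb1lb : ∀ t ∈ Ioo (0:ℝ) 1, β ≤ b1 t := by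
    intro t ht
    rcases le_or_gt t (1/2) with hle | hlt
    · calc β ≤ b1 (1/2) := min_le_left _ _
        _ ≤ b1 t := ha1 ht hhalf hle
    · have h1 : (c / Cc) * ((1/2) * b1 (1/2)) ≤ t * b1 t := hsva (1/2) hhalf t ht hlt.le
      have h2 : t * b1 t ≤ b1 t := by
        nlinarith [hb1pos t ht, ht.2, ht.1]
      calc β ≤ (c / Cc) * ((1/2) * b1 (1/2)) := min_le_right _ _
        _ ≤ b1 t := le_trans h1 h2
  -- choose x₀, θ, θ'
  obtain ⟨x₀, hx₀I, hx₀⟩ := hx0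
  set θ : ℝ := C0 / φ x₀ with hθdef
  have hθI : θ ∈ Ioo (0:ℝ) 1 := by
    constructor
    · exact div_pos hC0pos (hφpos x₀ hx₀I)
    · rw [hθdef, div_lt_one (hφpos x₀ hx₀I)]; exact hx₀
  set θ' : ℝ := (1 + θ) / 2 with hθ'def
  have hθ'I : θ' ∈ Ioo (0:ℝ) 1 := by
    constructor
    · rw [hθ'def]; linarith [hθI.1]
    · rw [hθ'def]; linarith [hθI.2]
  have hθθ' : θ ≤ θ' := by rw [hθ'def]; linarith [hθI.2]
  -- for s ≤ x₀ : C0 * s ≤ J 0 (θ s)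
  have hreg1 : ∀ s ∈ Ioo (0:ℝ) 1, s ≤ x₀ → C0 * s ≤ J 0 (θ * s) := by
    intro s hs hsx
    have hθs : θ * s ∈ Ioo (0:ℝ) 1 :=
      ⟨mul_pos hθI.1 hs.1, by nlinarith [hθI.2, hs.2, hθI.1, hs.1]⟩
    have h1 : φ (θ * s) * (θ * s - 0) ≤ J 0 (θ * s) := by
      refine hJge 0 (θ * s) le_rfl (by linarith [hθs.1]) hθs.2.le (θ * s) hθs
        (fun x hx => ?_)
      exact hφanti x ⟨hx.1, lt_trans hx.2 hθs.2⟩ (θ * s) hθs hx.2.le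
    have hθsx : θ * s ≤ x₀ := by nlinarith [hθI.2, hs.1, hx₀I.1]
    have h2 : φ x₀ ≤ φ (θ * s) := hφanti (θ * s) hθs x₀ hx₀I hθsx
    have h3 : θ * φ x₀ = C0 := div_mul_cancel₀ C0 (ne_of_gt (hφpos x₀ hx₀I))
    nlinarith [hs.1, hθs.1]
  -- constants
  obtain ⟨κ, hκdef⟩ : ∃ κ : ℝ, κ = (c / Cc) * θ' := ⟨_, rfl⟩
  have hκpos : 0 < κ := by
    rw [hκdef]
    have := hθ'I.1
    positivity
  obtain ⟨M', hM'def⟩ : ∃ M' : ℝ, M' = max M 1 := ⟨_, rfl⟩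
  have hM'pos : 0 < M' := by rw [hM'def]; exact lt_of_lt_of_le one_pos (le_max_right _ _)
  obtain ⟨ψδ, hψδdef⟩ : ∃ z : ℝ, z = J 0 x₀ - C0 * x₀ := ⟨_, rfl⟩
  have hψδpos : 0 < ψδ := by
    rw [hψδdef]
    have := hψpos x₀ hx₀I
    linarith
  have hgx₀ : g x₀ ∈ Ioo (0:ℝ) 1 := hgIoo x₀ hx₀I
  have hb1gx₀pos : 0 < b1 (g x₀) := hb1pos _ hgx₀
  have h1θ' : 0 < 1 - θ' := by linarith [hθ'I.2]
  have h1x₀ : 0 < 1 - x₀ := by linarith [hx₀I.2]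
  obtain ⟨C1, hC1def⟩ : ∃ z : ℝ, z = M' * C0 / ((1 - θ') * κ ^ p) := ⟨_, rfl⟩
  obtain ⟨C2, hC2def⟩ : ∃ z : ℝ, z = (b1 (g x₀)) ^ p * C0 * (1 - x₀) / (β ^ p * x₀ * ψδ) := ⟨_, rfl⟩
  have hκppos : 0 < κ ^ p := Real.rpow_pos_of_pos hκpos p
  have hβppos : 0 < β ^ p := Real.rpow_pos_of_pos hβpos p
  have hb1gx₀ppos : 0 < (b1 (g x₀)) ^ p := Real.rpow_pos_of_pos hb1gx₀pos p
  have hC1pos : 0 < C1 := by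
    rw [hC1def]
    exact div_pos (mul_pos hM'pos hC0pos) (mul_pos h1θ' hκppos)
  have hC2pos : 0 < C2 := by
    rw [hC2def]
    exact div_pos (mul_pos (mul_pos hb1gx₀ppos hC0pos) h1x₀)
      (mul_pos (mul_pos hβppos hx₀I.1) hψδpos)
  refine ⟨max C1 C2, lt_of_lt_of_le hC1pos (le_max_left _ _), ?_⟩
  intro s hs
  set w : ℝ := ∫ τ in Ioo s 1, 1 / (τ * b1 τ ^ p) with hwdef
  have hsIcc : s ∈ Icc (0:ℝ) 1 := ⟨hs.1.le, hs.2.le⟩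
  set fs : ℝ := (σi (s ^ (1/p))) ^ p with hfsdef
  have hfs_eq : fs = C0⁻¹ * J 0 s := hfval s hsIcc
  have hJs : C0 * s < J 0 s := hψpos s hs
  have hC0ne : C0 ≠ 0 := ne_of_gt hC0pos
  have hfs_gt : s < fs := by
    rw [hfs_eq]
    have h := mul_lt_mul_of_pos_left hJs (inv_pos.2 hC0pos)
    rwa [← mul_assoc, inv_mul_cancel₀ hC0ne, one_mul] at h
  have hJsplit : J 0 1 = J 0 s + J s 1 := hJadd 0 s 1 le_rfl hs.1.le hs.2.le le_rfl
  have hJ01 : J 0 1 = C0 := rfl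
  have hfs_le1 : fs ≤ 1 := by
    rw [hfs_eq]
    have h1 : J 0 s ≤ C0 := by
      have h2 := hJnonneg s 1 hs.1.le le_rfl
      linarith [hJsplit, hJ01]
    calc C0⁻¹ * J 0 s ≤ C0⁻¹ * C0 :=
          mul_le_mul_of_nonneg_left h1 (inv_pos.2 hC0pos).le
      _ = 1 := inv_mul_cancel₀ hC0ne
  have hfsIcc : fs ∈ Icc (0:ℝ) 1 := ⟨le_trans hs.1.le hfs_gt.le, hfs_le1⟩
  have hgfs : g fs = s := hgf s hsIcc
  have hgsI : g s ∈ Ioo (0:ℝ) 1 := hgIoo s hs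
  have hgval : ∀ τ ∈ Icc s fs, g τ ∈ Ioo (0:ℝ) 1 := by
    intro τ hτ
    have hτIcc : τ ∈ Icc (0:ℝ) 1 := ⟨le_trans hs.1.le hτ.1, le_trans hτ.2 hfs_le1⟩
    have h1 : g s ≤ g τ := hgmono s hsIcc τ hτIcc hτ.1
    have h2 : g τ ≤ g fs := hgmono τ hτIcc fs hfsIcc hτ.2
    exact ⟨lt_of_lt_of_le hgsI.1 h1, lt_of_le_of_lt (h2.trans_eq hgfs) hs.2⟩
  have hmonoh : MonotoneOn (fun τ => 1 / (b1 (g τ)) ^ p) (Icc s fs) := by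
    intro τ1 h1 τ2 h2 hle
    have hI1 : g τ1 ∈ Ioo (0:ℝ) 1 := hgval τ1 h1
    have hI2 : g τ2 ∈ Ioo (0:ℝ) 1 := hgval τ2 h2
    have hg12 : g τ1 ≤ g τ2 := hgmono τ1 ⟨le_trans hs.1.le h1.1, le_trans h1.2 hfs_le1⟩
      τ2 ⟨le_trans hs.1.le h2.1, le_trans h2.2 hfs_le1⟩ hle
    have hb : b1 (g τ2) ≤ b1 (g τ1) := ha1 hI1 hI2 hg12
    have hpw : (b1 (g τ2)) ^ p ≤ (b1 (g τ1)) ^ p :=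
      Real.rpow_le_rpow (hb1pos _ hI2).le hb hp.le
    exact one_div_le_one_div_of_le (Real.rpow_pos_of_pos (hb1pos _ hI2) p) hpw
  have hinth : IntegrableOn (fun τ => 1 / (b1 (g τ)) ^ p) (Icc s fs) :=
    hmonoh.integrableOn_isCompact isCompact_Icc
  have hinth' : IntegrableOn (fun τ => 1 / (b1 (g τ)) ^ p) (Ioo s fs) :=
    hinth.mono_set Ioo_subset_Icc_self
  set I : ℝ := ∫ τ in Ioo s fs, 1 / (b1 (g τ)) ^ p with hIdef
  -- generic lower bound for I
  have hlow : ∀ a : ℝ, s ≤ a → a ≤ fs → ∀ m ∈ Ioo (0:ℝ) 1,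
      (∀ τ ∈ Ioo a fs, b1 (g τ) ≤ b1 m) → (1 / (b1 m) ^ p) * (fs - a) ≤ I := by
    intro a ha hafs m hm hcomp
    have hsub : Ioo a fs ⊆ Icc s fs := fun x hx => ⟨le_trans ha hx.1.le, hx.2.le⟩
    have h1 : (1 / (b1 m) ^ p) * (fs - a) ≤ ∫ τ in Ioo a fs, 1 / (b1 (g τ)) ^ p := by
      have h2 := setIntegral_ge_of_const_le (μ := volume) (c := 1 / (b1 m) ^ p)
        measurableSet_Ioo (by simp [Real.volume_Ioo]) (fun τ hτ => ?_)
        (hinth.mono_set hsub)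
      · rw [Real.volume_real_Ioo_of_le hafs, smul_eq_mul, mul_comm] at h2
        exact h2
      · have hgI : g τ ∈ Ioo (0:ℝ) 1 := hgval τ (hsub hτ)
        have hpw : (b1 (g τ)) ^ p ≤ (b1 m) ^ p :=
          Real.rpow_le_rpow (hb1pos _ hgI).le (hcomp τ hτ) hp.le
        exact one_div_le_one_div_of_le (Real.rpow_pos_of_pos (hb1pos _ hgI) p) hpw
    have h3 : (∫ τ in Ioo a fs, 1 / (b1 (g τ)) ^ p) ≤ I := by
      refine setIntegral_mono_set hinth' ?_ (HasSubset.Subset.eventuallyLE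
        (Ioo_subset_Ioo_left ha))
      refine (ae_restrict_iff' measurableSet_Ioo).2 (Filter.Eventually.of_forall
        (fun τ hτ => ?_))
      have hgI : g τ ∈ Ioo (0:ℝ) 1 := hgval τ ⟨hτ.1.le, hτ.2.le⟩
      have := hb1pos _ hgI
      simp only [Pi.zero_apply]
      positivity
    linarith
  have hw0 : 0 ≤ w := by
    rw [hwdef]
    refine setIntegral_nonneg measurableSet_Ioo (fun τ hτ => ?_)
    have h1 : 0 < τ := lt_trans hs.1 hτ.1
    have h2 := hb1pos τ ⟨h1, hτ.2⟩
    positivity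
  rcases le_or_gt s x₀ with hsx | hsx
  · -- region 1 : s ≤ x₀
    obtain ⟨a, hadef⟩ : ∃ z : ℝ, z = C0⁻¹ * J 0 (θ' * s) := ⟨_, rfl⟩
    have hθ's_le_s : θ' * s ≤ s := by
      calc θ' * s ≤ 1 * s := mul_le_mul_of_nonneg_right hθ'I.2.le hs.1.le
        _ = s := one_mul s
    have hθ'sI : θ' * s ∈ Ioo (0:ℝ) 1 :=
      ⟨mul_pos hθ'I.1 hs.1, lt_of_le_of_lt hθ's_le_s hs.2⟩
    have hθ'sIcc : θ' * s ∈ Icc (0:ℝ) 1 := ⟨hθ'sI.1.le, hθ'sI.2.le⟩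
    have hga : g a = θ' * s := by
      have h1 := hgf (θ' * s) hθ'sIcc
      rw [hfval (θ' * s) hθ'sIcc] at h1
      rw [hadef]
      exact h1
    have hθs_le : θ * s ≤ θ' * s := mul_le_mul_of_nonneg_right hθθ' hs.1.le
    have hJmono : J 0 (θ * s) ≤ J 0 (θ' * s) := by
      have h1 := hJadd 0 (θ * s) (θ' * s) le_rfl (mul_pos hθI.1 hs.1).le hθs_le hθ'sI.2.le
      have h2 := hJnonneg (θ * s) (θ' * s) (mul_pos hθI.1 hs.1).le hθ'sI.2.le
      linarith
    have has : s ≤ a := by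
      have h1 := hreg1 s hs hsx
      have h2 : C0⁻¹ * (C0 * s) ≤ C0⁻¹ * J 0 (θ' * s) :=
        mul_le_mul_of_nonneg_left (le_trans h1 hJmono) (inv_pos.2 hC0pos).le
      rw [← mul_assoc, inv_mul_cancel₀ hC0ne, one_mul] at h2
      rw [hadef]
      exact h2
    have hafs : a ≤ fs := by
      rw [hadef, hfs_eq]
      have h1 := hJadd 0 (θ' * s) s le_rfl hθ'sI.1.le hθ's_le_s hs.2.le
      have h2 := hJnonneg (θ' * s) s hθ'sI.1.le hs.2.le
      exact mul_le_mul_of_nonneg_left (by linarith) (inv_pos.2 hC0pos).le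
    -- lower bound for the integral
    have hkey1 : (1 / (b1 (θ' * s)) ^ p) * (fs - a) ≤ I := by
      refine hlow a has hafs (θ' * s) hθ'sI (fun τ hτ => ?_)
      have hτIcc : τ ∈ Icc (0:ℝ) 1 :=
        ⟨le_trans (le_trans hs.1.le has) hτ.1.le, le_trans hτ.2.le hfs_le1⟩
      have haIcc : a ∈ Icc (0:ℝ) 1 := ⟨le_trans hs.1.le has, le_trans hafs hfs_le1⟩
      have h1 : g a ≤ g τ := hgmono a haIcc τ hτIcc hτ.1.le
      rw [hga] at h1
      have hgI : g τ ∈ Ioo (0:ℝ) 1 := hgval τ ⟨le_trans has hτ.1.le, hτ.2.le⟩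
      exact ha1 hθ'sI hgI h1
    have hkey2 : C0⁻¹ * (φ s * ((1 - θ') * s)) ≤ fs - a := by
      have h1 := hJadd 0 (θ' * s) s le_rfl hθ'sI.1.le hθ's_le_s hs.2.le
      have h2 : φ s * (s - θ' * s) ≤ J (θ' * s) s := by
        refine hJge (θ' * s) s hθ'sI.1.le hθ's_le_s hs.2.le s hs (fun x hx => ?_)
        exact hφanti x ⟨lt_trans hθ'sI.1 hx.1, lt_trans hx.2 hs.2⟩ s hs hx.2.le
      have h3 : fs - a = C0⁻¹ * J (θ' * s) s := by
        rw [hfs_eq, hadef, h1]; ring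
      rw [h3]
      have h4 : φ s * ((1 - θ') * s) ≤ J (θ' * s) s := by
        calc φ s * ((1 - θ') * s) = φ s * (s - θ' * s) := by ring
          _ ≤ J (θ' * s) s := h2
      exact mul_le_mul_of_nonneg_left h4 (inv_pos.2 hC0pos).le
    have hB1pos : 0 < (b1 (θ' * s)) ^ p := Real.rpow_pos_of_pos (hb1pos _ hθ'sI) p
    have hB2pos : 0 < (b2 s) ^ p := Real.rpow_pos_of_pos (hb2pos _ hs) p
    have hφsrw : φ s * (b2 s) ^ p = (b1 s) ^ p := by
      show (b1 s / b2 s) ^ p * (b2 s) ^ p = (b1 s) ^ p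
      rw [Real.div_rpow (hb1pos s hs).le (hb2pos s hs).le]
      field_simp
    have hb1c : κ * b1 (θ' * s) ≤ b1 s := by
      have h1 := hsva (θ' * s) hθ'sI s hs hθ's_le_s
      have h2 : (κ * b1 (θ' * s)) * s ≤ b1 s * s := by
        rw [hκdef]
        calc (c / Cc * θ' * b1 (θ' * s)) * s = c / Cc * (θ' * s * b1 (θ' * s)) := by ring
          _ ≤ s * b1 s := h1
          _ = b1 s * s := by ring
      exact le_of_mul_le_mul_right h2 hs.1
    have hkey3 : κ ^ p * (b1 (θ' * s)) ^ p ≤ (b1 s) ^ p := by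
      rw [← Real.mul_rpow hκpos.le (hb1pos _ hθ'sI).le]
      exact Real.rpow_le_rpow (mul_pos hκpos (hb1pos _ hθ'sI)).le hb1c hp.le
    have hfrac : κ ^ p / (b2 s) ^ p ≤ φ s / (b1 (θ' * s)) ^ p := by
      rw [div_le_div_iff₀ hB2pos hB1pos]
      calc κ ^ p * (b1 (θ' * s)) ^ p ≤ (b1 s) ^ p := hkey3
        _ = φ s * (b2 s) ^ p := hφsrw.symm
    obtain ⟨r0, hr0def⟩ : ∃ z : ℝ, z = C0⁻¹ * (1 - θ') * (κ ^ p) * s / (b2 s) ^ p :=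
      ⟨_, rfl⟩
    have hr0nn : 0 ≤ r0 := by
      rw [hr0def]
      exact (div_pos (mul_pos (mul_pos (mul_pos (inv_pos.2 hC0pos) h1θ') hκppos)
        hs.1) hB2pos).le
    have hr0I : r0 ≤ I := by
      have c2 : r0 ≤ (1 / (b1 (θ' * s)) ^ p) * (C0⁻¹ * (φ s * ((1 - θ') * s))) := by
        have h5 : (C0⁻¹ * (1 - θ') * s) * (κ ^ p / (b2 s) ^ p) ≤
            (C0⁻¹ * (1 - θ') * s) * (φ s / (b1 (θ' * s)) ^ p) := by
          exact mul_le_mul_of_nonneg_left hfrac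
            (mul_pos (mul_pos (inv_pos.2 hC0pos) h1θ') hs.1).le
        calc r0 = (C0⁻¹ * (1 - θ') * s) * (κ ^ p / (b2 s) ^ p) := by
              rw [hr0def]; ring
          _ ≤ (C0⁻¹ * (1 - θ') * s) * (φ s / (b1 (θ' * s)) ^ p) := h5
          _ = (1 / (b1 (θ' * s)) ^ p) * (C0⁻¹ * (φ s * ((1 - θ') * s))) := by ring
      have c1 : (1 / (b1 (θ' * s)) ^ p) * (C0⁻¹ * (φ s * ((1 - θ') * s))) ≤
          (1 / (b1 (θ' * s)) ^ p) * (fs - a) := by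
        exact mul_le_mul_of_nonneg_left hkey2 (by positivity)
      linarith
    have hwb : w ≤ M' / (b2 s) ^ p := by
      rw [le_div_iff₀ hB2pos]
      have h1 := hM s hs
      have h2 : M ≤ M' := by rw [hM'def]; exact le_max_left _ _
      rw [← hwdef] at h1
      calc w * (b2 s) ^ p = (b2 s) ^ p * w := by ring
        _ ≤ M := h1
        _ ≤ M' := h2
    have hLHS : s * w ≤ C1 * r0 := by
      have hC1r0 : C1 * r0 = M' * s / (b2 s) ^ p := by
        rw [hC1def, hr0def]
        field_simp
      calc s * w ≤ s * (M' / (b2 s) ^ p) :=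
            mul_le_mul_of_nonneg_left hwb hs.1.le
        _ = M' * s / (b2 s) ^ p := by ring
        _ = C1 * r0 := hC1r0.symm
    calc s * w ≤ C1 * r0 := hLHS
      _ ≤ max C1 C2 * I :=
          mul_le_mul (le_max_left _ _) hr0I hr0nn
            (le_trans hC1pos.le (le_max_left _ _))
  · -- region 2 : x₀ < s
    obtain ⟨P, hPdef⟩ : ∃ z : ℝ, z = J 0 s - C0 * s := ⟨_, rfl⟩
    have hPpos : 0 < P := by rw [hPdef]; linarith [hJs]
    have h1s : (0:ℝ) ≤ 1 - s := by linarith [hs.2]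
    have hA : (1 - s) * (C0 - φ s) ≤ P := by
      have h1 : J s 1 ≤ φ s * (1 - s) := by
        refine hJle s 1 hs.1.le hs.2.le le_rfl s hs (fun x hx => ?_)
        exact hφanti s hs x ⟨lt_trans hs.1 hx.1, hx.2⟩ hx.1.le
      have h2 : C0 = J 0 s + J s 1 := by rw [← hJ01]; exact hJsplit
      rw [hPdef]
      linarith only [h1, h2]
    have hB : φ s * (s - x₀) ≤ J x₀ s := by
      refine hJge x₀ s hx₀I.1.le hsx.le hs.2.le s hs (fun x hx => ?_)
      exact hφanti x ⟨lt_trans hx₀I.1 hx.1, lt_trans hx.2 hs.2⟩ s hs hx.2.le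
    have hii : ψδ ≤ P + (s - x₀) * (C0 - φ s) := by
      have h3 : J 0 s = J 0 x₀ + J x₀ s := hJadd 0 x₀ s le_rfl hx₀I.1.le hsx.le hs.2.le
      rw [hψδdef, hPdef]
      linarith only [hB, h3]
    have hlemE : (1 - s) * ψδ ≤ (1 - x₀) * P := by
      have e1 : (1 - s) * ψδ ≤ (1 - s) * P + (1 - s) * ((s - x₀) * (C0 - φ s)) := by
        have h4 := mul_le_mul_of_nonneg_left hii h1s
        linarith only [h4]
      have e2 : (1 - s) * ((s - x₀) * (C0 - φ s)) ≤ (s - x₀) * P := by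
        have h4 := mul_le_mul_of_nonneg_left hA (by linarith [hsx] : (0:ℝ) ≤ s - x₀)
        linarith only [h4]
      linarith only [e1, e2]
    have hkey1 : (1 / (b1 (g x₀)) ^ p) * (fs - s) ≤ I := by
      refine hlow s le_rfl hfs_gt.le (g x₀) hgx₀ (fun τ hτ => ?_)
      have hτIcc : τ ∈ Icc (0:ℝ) 1 := ⟨le_trans hs.1.le hτ.1.le, le_trans hτ.2.le hfs_le1⟩
      have h1 : g x₀ ≤ g τ := by
        have h2 : g x₀ ≤ g s := hgmono x₀ ⟨hx₀I.1.le, hx₀I.2.le⟩ s hsIcc hsx.le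
        have h3 : g s ≤ g τ := hgmono s hsIcc τ hτIcc hτ.1.le
        linarith
      exact ha1 hgx₀ (hgval τ ⟨hτ.1.le, hτ.2.le⟩) h1
    have hfs_s : C0⁻¹ * ((1 - s) * ψδ / (1 - x₀)) ≤ fs - s := by
      have h1 : fs - s = C0⁻¹ * P := by
        rw [hfs_eq, hPdef, mul_sub]
        congr 1
        rw [← mul_assoc, inv_mul_cancel₀ hC0ne, one_mul]
      have h2 : (1 - s) * ψδ / (1 - x₀) ≤ P := by
        rw [div_le_iff₀ h1x₀]
        linarith only [hlemE]
      rw [h1]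
      exact mul_le_mul_of_nonneg_left h2 (inv_pos.2 hC0pos).le
    have hwup : w ≤ (1 / β ^ p) * ((1 - s) / x₀) := by
      have hint2 : IntegrableOn (fun τ => (1 / β ^ p) * τ⁻¹) (Ioo s 1) := by
        refine (((continuousOn_const (c := 1 / β ^ p)).mul
          (continuousOn_id.inv₀ (fun x hx => ?_))).integrableOn_Icc).mono_set
          Ioo_subset_Icc_self
        exact ne_of_gt (lt_of_lt_of_le hs.1 hx.1)
      have hmono : w ≤ ∫ τ in Ioo s 1, (1 / β ^ p) * τ⁻¹ := by
        rw [hwdef]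
        refine integral_mono_of_nonneg ?_ hint2 ?_
        · refine (ae_restrict_iff' measurableSet_Ioo).2 (Filter.Eventually.of_forall
            (fun τ hτ => ?_))
          have hτ0 : 0 < τ := lt_trans hs.1 hτ.1
          have hb := hb1pos τ ⟨hτ0, hτ.2⟩
          simp only [Pi.zero_apply]
          positivity
        · refine (ae_restrict_iff' measurableSet_Ioo).2 (Filter.Eventually.of_forall
            (fun τ hτ => ?_))
          have hτ0 : 0 < τ := lt_trans hs.1 hτ.1
          have hb := hb1pos τ ⟨hτ0, hτ.2⟩
          have hlb := hb1lb τ ⟨hτ0, hτ.2⟩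
          have h1 : β ^ p ≤ (b1 τ) ^ p := Real.rpow_le_rpow hβpos.le hlb hp.le
          have hXpos : 0 < (b1 τ) ^ p := Real.rpow_pos_of_pos hb p
          have h2 : 1 / (b1 τ) ^ p ≤ 1 / β ^ p := one_div_le_one_div_of_le hβppos h1
          calc 1 / (τ * b1 τ ^ p) = (1 / (b1 τ) ^ p) * τ⁻¹ := by
                field_simp
            _ ≤ (1 / β ^ p) * τ⁻¹ := mul_le_mul_of_nonneg_right h2 (inv_nonneg.2 hτ0.le)
      have hcalc : (∫ τ in Ioo s 1, (1 / β ^ p) * τ⁻¹) = (1 / β ^ p) * Real.log (1 / s) := by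
        rw [MeasureTheory.integral_const_mul]
        congr 1
        rw [← integral_Ioc_eq_integral_Ioo, ← intervalIntegral.integral_of_le hs.2.le,
          integral_inv (by
            rw [uIcc_of_le hs.2.le]
            exact fun h => (not_le.2 hs.1) h.1)]
      have hlog : Real.log (1 / s) ≤ (1 - s) / s := by
        have h1 := Real.log_le_sub_one_of_pos (one_div_pos.2 hs.1)
        calc Real.log (1 / s) ≤ 1 / s - 1 := h1
          _ = (1 - s) / s := by
            rw [eq_div_iff (ne_of_gt hs.1), sub_mul, one_div,
              inv_mul_cancel₀ (ne_of_gt hs.1), one_mul]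
      have hdiv : (1 - s) / s ≤ (1 - s) / x₀ :=
        div_le_div_of_nonneg_left h1s hx₀I.1 hsx.le
      calc w ≤ (1 / β ^ p) * Real.log (1 / s) := by rw [← hcalc]; exact hmono
        _ ≤ (1 / β ^ p) * ((1 - s) / s) := by
            apply mul_le_mul_of_nonneg_left hlog
            positivity
        _ ≤ (1 / β ^ p) * ((1 - s) / x₀) := by
            apply mul_le_mul_of_nonneg_left hdiv
            positivity
    obtain ⟨r2, hr2def⟩ : ∃ z : ℝ,
        z = C0⁻¹ * ((1 - s) * ψδ / (1 - x₀)) * (1 / (b1 (g x₀)) ^ p) := ⟨_, rfl⟩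
    have hr2nn : 0 ≤ r2 := by
      rw [hr2def]
      have h0 := inv_pos.2 hC0pos
      have h5 : 0 ≤ (1 - s) * ψδ / (1 - x₀) :=
        div_nonneg (mul_nonneg h1s hψδpos.le) h1x₀.le
      have h6 : 0 ≤ 1 / (b1 (g x₀)) ^ p := by positivity
      exact mul_nonneg (mul_nonneg h0.le h5) h6
    have hr2I : r2 ≤ I := by
      calc r2 = (1 / (b1 (g x₀)) ^ p) * (C0⁻¹ * ((1 - s) * ψδ / (1 - x₀))) := by
            rw [hr2def]; ring
        _ ≤ (1 / (b1 (g x₀)) ^ p) * (fs - s) := by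
            apply mul_le_mul_of_nonneg_left hfs_s
            positivity
        _ ≤ I := hkey1
    have hC2r2 : C2 * r2 = (1 - s) / (β ^ p * x₀) := by
      have hAne : (b1 (g x₀)) ^ p ≠ 0 := ne_of_gt hb1gx₀ppos
      have hψδne : ψδ ≠ 0 := ne_of_gt hψδpos
      have h1x₀ne : (1 - x₀) ≠ 0 := ne_of_gt h1x₀
      have hβpne : β ^ p ≠ 0 := ne_of_gt hβppos
      have hx₀ne : x₀ ≠ 0 := ne_of_gt hx₀I.1
      rw [hC2def, hr2def]
      field_simp
    have hLHS : s * w ≤ C2 * r2 := by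
      have h1 : s * w ≤ w := by
        calc s * w ≤ 1 * w := mul_le_mul_of_nonneg_right hs.2.le hw0
          _ = w := one_mul w
      calc s * w ≤ w := h1
        _ ≤ (1 / β ^ p) * ((1 - s) / x₀) := hwup
        _ = (1 - s) / (β ^ p * x₀) := by ring
        _ = C2 * r2 := hC2r2.symm
    calc s * w ≤ C2 * r2 := hLHS
      _ ≤ max C1 C2 * I :=
          mul_le_mul (le_max_right _ _) hr2I hr2nn
            (le_trans hC2pos.le (le_max_right _ _))
end

section
/- Let p ∈ (0,∞), α, β ≥ 0, and set b_1(t) = ℓ(t)^α, b_2(t) = ℓ(t)^{-β}, where ℓ(t) = 1 - log t. Then (b_1, b_2) ∈ B_p if and only if either α + β ≥ 1/p and β > 0, or α > 1/p and β = 0. -/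
open MeasureTheory Set ENNReal Filter Topology

noncomputable section

/-- abbreviation -/
def ell (t : ℝ) : ℝ := 1 - Real.log t

lemma ell_pos {t : ℝ} (ht : 0 < t) (ht1 : t ≤ 1) : 0 < ell t := by
  have := Real.log_nonpos ht.le ht1
  unfold ell; linarith

lemma one_le_ell {t : ℝ} (ht : 0 < t) (ht1 : t ≤ 1) : 1 ≤ ell t := by
  have := Real.log_nonpos ht.le ht1
  unfold ell; linarith

lemma ell_anti {s t : ℝ} (hs : 0 < s) (hst : s ≤ t) : ell t ≤ ell s := by
  unfold ell
  have := Real.log_le_log hs hst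
  linarith

lemma ell_exp (L : ℝ) : ell (Real.exp (1 - L)) = L := by
  unfold ell; rw [Real.log_exp]; ring

lemma hasDerivAt_g (e γ : ℝ) {t : ℝ} (ht : 0 < t) (ht1 : t < 1) :
    HasDerivAt (fun t => t ^ e * ell t ^ γ)
      (t ^ (e-1) * ell t ^ (γ-1) * (e * ell t - γ)) t := by
  have hℓ : 0 < ell t := ell_pos ht ht1.le
  have h1 : HasDerivAt (fun t : ℝ => t ^ e) (e * t ^ (e-1)) t :=
    Real.hasDerivAt_rpow_const (Or.inl ht.ne')
  have h2 : HasDerivAt ell (-t⁻¹) t := by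
    show HasDerivAt (fun x => 1 - Real.log x) (-t⁻¹) t
    simpa using ((Real.hasDerivAt_log ht.ne').const_sub 1)
  have h3 : HasDerivAt (fun x : ℝ => x ^ γ) (γ * (ell t) ^ (γ-1)) (ell t) :=
    Real.hasDerivAt_rpow_const (Or.inl hℓ.ne')
  have h4 := (h3.comp t h2)
  have h5 := h1.mul h4
  convert h5 using 1
  · rfl
  · rfl
  · rfl
  have e1 : t ^ (e-1) = t ^ e / t := Real.rpow_sub_one ht.ne' e
  have e2 : ell t ^ (γ-1) = ell t ^ γ / ell t := Real.rpow_sub_one hℓ.ne' γ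
  rw [e1, e2, Function.comp_apply]
  field_simp
  ring

lemma cont_integrand (a t : ℝ) (ht : 0 < t) :
    ContinuousOn (fun s => 1 / (s * ell s ^ a)) (Icc t 1) := by
  intro s hs
  have hs0 : 0 < s := lt_of_lt_of_le ht hs.1
  have hℓ : 0 < ell s := ell_pos hs0 hs.2
  apply ContinuousWithinAt.div continuousWithinAt_const
  · apply ContinuousWithinAt.mul continuousWithinAt_id
    apply ContinuousWithinAt.rpow_const
    · exact (continuousWithinAt_const.sub ((Real.continuousAt_log hs0.ne').continuousWithinAt))
    · exact Or.inl hℓ.ne'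
  · positivity

lemma hasDerivAt_F (a : ℝ) {s : ℝ} (hs : 0 < s) (hs1 : s ≤ 1) (ha : a ≠ 1) :
    HasDerivAt (fun s => ell s ^ (1-a) / (a-1)) (1 / (s * ell s ^ a)) s := by
  have hℓ : 0 < ell s := ell_pos hs hs1
  have h2 : HasDerivAt ell (-s⁻¹) s := by
    show HasDerivAt (fun x => 1 - Real.log x) (-s⁻¹) s
    simpa using ((Real.hasDerivAt_log hs.ne').const_sub 1)
  have h3 : HasDerivAt (fun x : ℝ => x ^ (1-a)) ((1-a) * (ell s) ^ (1-a-1)) (ell s) :=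
    Real.hasDerivAt_rpow_const (Or.inl hℓ.ne')
  have h4 := (h3.comp s h2).div_const (a-1)
  convert h4 using 1
  · rfl
  · rfl
  · rfl
  have e2 : ell s ^ (1-a-1) = ell s ^ (1-a) / ell s := by
    rw [Real.rpow_sub_one hℓ.ne']
  have hrw : ell s ^ (1-a) = ell s ^ (-a) * ell s := by
    rw [Real.rpow_sub_one hℓ.ne'] at *
    rw [show (1:ℝ) - a = -a + 1 by ring, Real.rpow_add_one hℓ.ne']
  have hna : ell s ^ (-a) = (ell s ^ a)⁻¹ := Real.rpow_neg hℓ.le a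
  rw [e2, hrw, hna]
  have ha1 : a - 1 ≠ 0 := sub_ne_zero.mpr ha
  field_simp
  ring

lemma int_val (a t : ℝ) (ht : 0 < t) (ht1 : t ≤ 1) (ha : a ≠ 1) :
    ∫ s in Ioo t 1, 1 / (s * ell s ^ a) = (ell t ^ (1-a) - 1) / (1-a) := by
  rw [← integral_Ioc_eq_integral_Ioo, ← intervalIntegral.integral_of_le ht1]
  have key := intervalIntegral.integral_eq_sub_of_hasDerivAt
    (f := fun s => ell s ^ (1-a) / (a-1)) (f' := fun s => 1 / (s * ell s ^ a))
    (a := t) (b := 1) ?_ ?_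
  · rw [key]
    have : ell (1:ℝ) = 1 := by unfold ell; simp
    rw [this, Real.one_rpow]
    have ha1 : a - 1 ≠ 0 := sub_ne_zero.mpr ha
    have ha2 : (1:ℝ) - a ≠ 0 := fun h => ha1 (by linarith)
    field_simp
    ring
  · intro s hs
    rw [uIcc_of_le ht1] at hs
    exact hasDerivAt_F a (lt_of_lt_of_le ht hs.1) hs.2 ha
  · exact (cont_integrand a t ht).intervalIntegrable_of_Icc ht1

lemma int_val_one (t : ℝ) (ht : 0 < t) (ht1 : t ≤ 1) :
    ∫ s in Ioo t 1, 1 / (s * ell s ^ (1:ℝ)) = Real.log (ell t) := by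
  rw [← integral_Ioc_eq_integral_Ioo, ← intervalIntegral.integral_of_le ht1]
  have key := intervalIntegral.integral_eq_sub_of_hasDerivAt
    (f := fun s => -Real.log (ell s)) (f' := fun s => 1 / (s * ell s ^ (1:ℝ)))
    (a := t) (b := 1) ?_ ?_
  · rw [key]
    have : ell (1:ℝ) = 1 := by unfold ell; simp
    rw [this, Real.log_one]
    ring
  · intro s hs
    rw [uIcc_of_le ht1] at hs
    have hs0 : 0 < s := lt_of_lt_of_le ht hs.1
    have hℓ : 0 < ell s := ell_pos hs0 hs.2
    have h2 : HasDerivAt ell (-s⁻¹) s := by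
      show HasDerivAt (fun x => 1 - Real.log x) (-s⁻¹) s
      simpa using ((Real.hasDerivAt_log hs0.ne').const_sub 1)
    have h3 := ((Real.hasDerivAt_log hℓ.ne').comp s h2).neg
    convert h3 using 1
    · rfl
    simp only [Real.rpow_one]
    field_simp
  · exact (cont_integrand 1 t ht).intervalIntegrable_of_Icc ht1

lemma rpow_sandwich {K L γ : ℝ} (hK : 1 ≤ K) (hL1 : 1 ≤ L) (hLK : L ≤ K) :
    K ^ (γ - |γ|) ≤ L ^ γ ∧ L ^ γ ≤ K ^ (γ + |γ|) := by
  rcases le_or_gt 0 γ with hγ | hγ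
  · rw [abs_of_nonneg hγ]
    constructor
    · simpa using Real.one_le_rpow hL1 hγ
    · calc L^γ ≤ K^γ := Real.rpow_le_rpow (by linarith) hLK hγ
        _ ≤ K^(γ+γ) := Real.rpow_le_rpow_of_exponent_le hK (by linarith)
  · rw [abs_of_neg hγ]
    constructor
    · rw [sub_neg_eq_add]
      calc K^(γ+γ) ≤ K^γ := Real.rpow_le_rpow_of_exponent_le hK (by linarith)
        _ ≤ L^γ := Real.rpow_le_rpow_of_nonpos (by linarith) hLK hγ.le
    · have : γ + -γ = 0 := by ring
      rw [this, Real.rpow_zero]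
      exact Real.rpow_le_one_of_one_le_of_nonpos hL1 hγ.le

lemma g_contOn (e γ : ℝ) {s : Set ℝ} (hs : s ⊆ Ioc 0 1) :
    ContinuousOn (fun t => t ^ e * ell t ^ γ) s := by
  intro t ht
  have ht0 : 0 < t := (hs ht).1
  have hℓ : 0 < ell t := ell_pos ht0 (hs ht).2
  apply ContinuousWithinAt.mul
  · exact (Real.continuousAt_rpow_const t e (Or.inl ht0.ne')).continuousWithinAt
  · apply ContinuousWithinAt.rpow_const
    · exact (continuousWithinAt_const.sub ((Real.continuousAt_log ht0.ne').continuousWithinAt))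
    · exact Or.inl hℓ.ne'

lemma t0_lt_one {K : ℝ} (hK : 2 ≤ K) : Real.exp (1 - K) < 1 :=
  Real.exp_lt_one_iff.mpr (by linarith)

lemma g_mono_on (e γ K : ℝ) (hK : 2 ≤ K) (h : ∀ L, K ≤ L → 0 ≤ e * L - γ) :
    MonotoneOn (fun t => t ^ e * ell t ^ γ) (Ioc 0 (Real.exp (1-K))) := by
  have ht1 : Real.exp (1-K) < 1 := t0_lt_one hK
  apply monotoneOn_of_deriv_nonneg (convex_Ioc _ _)
  · exact g_contOn e γ (fun x hx => ⟨hx.1, le_of_lt (lt_of_le_of_lt hx.2 ht1)⟩)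
  · rw [interior_Ioc]
    intro x hx
    exact ((hasDerivAt_g e γ hx.1 (hx.2.trans ht1)).differentiableAt).differentiableWithinAt
  · rw [interior_Ioc]
    intro x hx
    rw [(hasDerivAt_g e γ hx.1 (hx.2.trans ht1)).deriv]
    have hℓK : K ≤ ell x := by
      have := ell_anti hx.1 hx.2.le
      rwa [ell_exp] at this
    have h1 : (0:ℝ) < x ^ (e-1) := Real.rpow_pos_of_pos hx.1 _
    have h2 : (0:ℝ) < ell x ^ (γ-1) := Real.rpow_pos_of_pos (ell_pos hx.1 (hx.2.trans ht1).le) _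
    have h3 := h (ell x) hℓK
    positivity

lemma g_anti_on (e γ K : ℝ) (hK : 2 ≤ K) (h : ∀ L, K ≤ L → e * L - γ ≤ 0) :
    AntitoneOn (fun t => t ^ e * ell t ^ γ) (Ioc 0 (Real.exp (1-K))) := by
  have ht1 : Real.exp (1-K) < 1 := t0_lt_one hK
  apply antitoneOn_of_deriv_nonpos (convex_Ioc _ _)
  · exact g_contOn e γ (fun x hx => ⟨hx.1, le_of_lt (lt_of_le_of_lt hx.2 ht1)⟩)
  · rw [interior_Ioc]
    intro x hx
    exact ((hasDerivAt_g e γ hx.1 (hx.2.trans ht1)).differentiableAt).differentiableWithinAt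
  · rw [interior_Ioc]
    intro x hx
    rw [(hasDerivAt_g e γ hx.1 (hx.2.trans ht1)).deriv]
    have hℓK : K ≤ ell x := by
      have := ell_anti hx.1 hx.2.le
      rwa [ell_exp] at this
    have h1 : (0:ℝ) < x ^ (e-1) := Real.rpow_pos_of_pos hx.1 _
    have h2 : (0:ℝ) < ell x ^ (γ-1) := Real.rpow_pos_of_pos (ell_pos hx.1 (hx.2.trans ht1).le) _
    have h3 := h (ell x) hℓK
    have : x ^ (e-1) * ell x ^ (γ-1) * (e * ell x - γ) ≤ x ^ (e-1) * ell x ^ (γ-1) * 0 :=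
      mul_le_mul_of_nonneg_left h3 (by positivity)
    simpa using this

lemma equiv_patch (e γ K : ℝ) (hK : 2 ≤ K) :
    EquivOn (fun t => t ^ e * ell t ^ γ)
      (fun t => if t ≤ Real.exp (1-K) then t ^ e * ell t ^ γ else t ^ e * K ^ γ)
      (Ioo 0 1) := by
  have hK0 : (0:ℝ) < K := by linarith
  have hK1 : (1:ℝ) ≤ K := by linarith
  refine ⟨K ^ (-|γ|), K ^ |γ|, Real.rpow_pos_of_pos hK0 _, Real.rpow_pos_of_pos hK0 _, ?_⟩
  intro t ht
  have hte : (0:ℝ) ≤ t ^ e := (Real.rpow_pos_of_pos ht.1 e).le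
  by_cases h0 : t ≤ Real.exp (1-K)
  · simp only [if_pos h0]
    have hg : (0:ℝ) < t ^ e * ell t ^ γ := by
      have := ell_pos ht.1 ht.2.le
      have := Real.rpow_pos_of_pos ht.1 e
      have := Real.rpow_pos_of_pos (ell_pos ht.1 ht.2.le) γ
      positivity
    constructor
    · exact mul_le_of_le_one_left hg.le
        (Real.rpow_le_one_of_one_le_of_nonpos hK1 (neg_nonpos.mpr (abs_nonneg γ)))
    · exact le_mul_of_one_le_left hg.le (Real.one_le_rpow hK1 (abs_nonneg γ))
  · simp only [if_neg h0]
    have hL1 : 1 ≤ ell t := one_le_ell ht.1 ht.2.le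
    have hLK : ell t ≤ K := by
      have := ell_anti (Real.exp_pos (1-K)) (le_of_lt (not_le.mp h0))
      rwa [ell_exp] at this
    obtain ⟨hs1, hs2⟩ := rpow_sandwich hK1 hL1 hLK
    constructor
    · calc K ^ (-|γ|) * (t ^ e * K ^ γ) = t ^ e * (K ^ (-|γ|) * K ^ γ) := by ring
        _ = t ^ e * K ^ (γ - |γ|) := by rw [← Real.rpow_add hK0]; congr 1; ring
        _ ≤ t ^ e * ell t ^ γ := mul_le_mul_of_nonneg_left hs1 hte
    · calc t ^ e * ell t ^ γ ≤ t ^ e * K ^ (γ + |γ|) := mul_le_mul_of_nonneg_left hs2 hte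
        _ = t ^ e * (K ^ γ * K ^ |γ|) := by rw [← Real.rpow_add hK0]
        _ = K ^ |γ| * (t ^ e * K ^ γ) := by ring

lemma patch_mono (e γ : ℝ) (he : 0 < e) :
    ∃ be : ℝ → ℝ, MonotoneOn be (Ioo (0:ℝ) 1) ∧
      EquivOn (fun t => t ^ e * ell t ^ γ) be (Ioo 0 1) := by
  set K := |γ| / e + 2 with hKdef
  have hK : 2 ≤ K := by
    have : 0 ≤ |γ| / e := div_nonneg (abs_nonneg γ) he.le
    rw [hKdef]; linarith
  have hcond : ∀ L, K ≤ L → 0 ≤ e * L - γ := by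
    intro L hL
    have h1 : e * K ≤ e * L := mul_le_mul_of_nonneg_left hL he.le
    have h2 : e * K = |γ| + 2 * e := by rw [hKdef]; field_simp
    have h3 : γ ≤ |γ| := le_abs_self γ
    linarith
  have hmono := g_mono_on e γ K hK hcond
  set t₀ := Real.exp (1-K) with ht₀def
  have ht₀0 : 0 < t₀ := Real.exp_pos _
  refine ⟨fun t => if t ≤ t₀ then t ^ e * ell t ^ γ else t ^ e * K ^ γ, ?_, equiv_patch e γ K hK⟩
  intro x hx y hy hxy
  have hKγ : (0:ℝ) ≤ K ^ γ := (Real.rpow_pos_of_pos (by linarith) γ).le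
  by_cases hy0 : y ≤ t₀
  · have hx0 : x ≤ t₀ := hxy.trans hy0
    simp only [if_pos hx0, if_pos hy0]
    exact hmono ⟨hx.1, hx0⟩ ⟨hy.1, hy0⟩ hxy
  · by_cases hx0 : x ≤ t₀
    · simp only [if_pos hx0, if_neg hy0]
      calc x ^ e * ell x ^ γ ≤ t₀ ^ e * ell t₀ ^ γ :=
            hmono ⟨hx.1, hx0⟩ ⟨ht₀0, le_refl _⟩ hx0
        _ = t₀ ^ e * K ^ γ := by rw [ht₀def, ell_exp]
        _ ≤ y ^ e * K ^ γ := mul_le_mul_of_nonneg_right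
            (Real.rpow_le_rpow ht₀0.le (le_of_lt (not_le.mp hy0)) he.le) hKγ
    · simp only [if_neg hx0, if_neg hy0]
      exact mul_le_mul_of_nonneg_right
        (Real.rpow_le_rpow (by linarith [hx.1]) hxy he.le) hKγ

lemma patch_anti (e γ : ℝ) (he : 0 < e) :
    ∃ bm : ℝ → ℝ, AntitoneOn bm (Ioo (0:ℝ) 1) ∧
      EquivOn (fun t => t ^ (-e) * ell t ^ γ) bm (Ioo 0 1) := by
  set K := |γ| / e + 2 with hKdef
  have hK : 2 ≤ K := by
    have : 0 ≤ |γ| / e := div_nonneg (abs_nonneg γ) he.le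
    rw [hKdef]; linarith
  have hcond : ∀ L, K ≤ L → (-e) * L - γ ≤ 0 := by
    intro L hL
    have h1 : e * K ≤ e * L := mul_le_mul_of_nonneg_left hL he.le
    have h2 : e * K = |γ| + 2 * e := by rw [hKdef]; field_simp
    have h3 : -|γ| ≤ γ := neg_abs_le γ
    nlinarith
  have hanti := g_anti_on (-e) γ K hK hcond
  set t₀ := Real.exp (1-K) with ht₀def
  have ht₀0 : 0 < t₀ := Real.exp_pos _
  refine ⟨fun t => if t ≤ t₀ then t ^ (-e) * ell t ^ γ else t ^ (-e) * K ^ γ, ?_,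
    equiv_patch (-e) γ K hK⟩
  intro x hx y hy hxy
  have hKγ : (0:ℝ) ≤ K ^ γ := (Real.rpow_pos_of_pos (by linarith) γ).le
  by_cases hy0 : y ≤ t₀
  · have hx0 : x ≤ t₀ := hxy.trans hy0
    simp only [if_pos hx0, if_pos hy0]
    exact hanti ⟨hx.1, hx0⟩ ⟨hy.1, hy0⟩ hxy
  · by_cases hx0 : x ≤ t₀
    · simp only [if_pos hx0, if_neg hy0]
      calc y ^ (-e) * K ^ γ ≤ t₀ ^ (-e) * K ^ γ := mul_le_mul_of_nonneg_right
            (Real.rpow_le_rpow_of_nonpos ht₀0 (le_of_lt (not_le.mp hy0))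
              (neg_nonpos.mpr he.le)) hKγ
        _ = t₀ ^ (-e) * ell t₀ ^ γ := by rw [ht₀def, ell_exp]
        _ ≤ x ^ (-e) * ell x ^ γ := hanti ⟨hx.1, hx0⟩ ⟨ht₀0, le_refl _⟩ hx0
    · simp only [if_neg hx0, if_neg hy0]
      exact mul_le_mul_of_nonneg_right
        (Real.rpow_le_rpow_of_nonpos hx.1 hxy (neg_nonpos.mpr he.le)) hKγ

lemma sv_ell_rpow (γ : ℝ) : SlowlyVarying (fun t => ell t ^ γ) := by
  refine ⟨?_, ?_, ?_⟩
  · unfold ell; measurability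
  · intro t ht
    exact Real.rpow_pos_of_pos (ell_pos ht.1 ht.2.le) γ
  · intro ε hε
    exact ⟨patch_mono ε γ hε, patch_anti ε γ hε⟩

lemma cont_ell_rpow (γ : ℝ) : ContinuousOn (fun t => ell t ^ γ) (Ioo (0:ℝ) 1) := by
  intro t ht
  have ht0 : 0 < t := ht.1
  have hℓ : 0 < ell t := ell_pos ht0 ht.2.le
  apply ContinuousWithinAt.rpow_const
  · exact (continuousWithinAt_const.sub ((Real.continuousAt_log ht0.ne').continuousWithinAt))
  · exact Or.inl hℓ.ne'

lemma cond_c (p α β : ℝ) (hp : 0 < p) (hα : 0 ≤ α) (hβ : 0 ≤ β) :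
    ∃ δ ∈ Ioo (0:ℝ) 1, EquivOn (fun t => ell t ^ α)
      (fun t => ell (t * (ell t ^ α / ell t ^ (-β)) ^ p) ^ α) (Ioo 0 δ) := by
  set γ := (α + β) * p with hγdef
  have hγ : 0 ≤ γ := by rw [hγdef]; positivity
  set L₀ := 16 * γ ^ 2 + 2 with hL₀def
  have hL₀ : 2 ≤ L₀ := by rw [hL₀def]; nlinarith
  refine ⟨Real.exp (1 - L₀), ⟨Real.exp_pos _, t0_lt_one hL₀⟩, 1, 2 ^ α, one_pos,
    Real.rpow_pos_of_pos two_pos α, ?_⟩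
  intro t ht
  have ht0 : 0 < t := ht.1
  have ht1 : t < 1 := ht.2.trans (t0_lt_one hL₀)
  have hℓ : 0 < ell t := ell_pos ht0 ht1.le
  have hL : L₀ ≤ ell t := by
    have := ell_anti ht0 ht.2.le
    rwa [ell_exp] at this
  have h1 : ell t ^ α / ell t ^ (-β) = ell t ^ (α + β) := by
    rw [← Real.rpow_sub hℓ]; congr 1; ring
  have h2 : (ell t ^ (α + β)) ^ p = ell t ^ γ := by
    rw [← Real.rpow_mul hℓ.le]
  have hu : ell (t * ell t ^ γ) = ell t - γ * Real.log (ell t) := by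
    show 1 - Real.log (t * ell t ^ γ) = _
    rw [Real.log_mul ht0.ne' (ne_of_gt (Real.rpow_pos_of_pos hℓ γ)),
      Real.log_rpow hℓ]
    show 1 - (Real.log t + γ * Real.log (ell t)) = (1 - Real.log t) - γ * Real.log (ell t)
    ring
  have hlog0 : 0 ≤ Real.log (ell t) := Real.log_nonneg (one_le_ell ht0 ht1.le)
  have hsq : Real.sqrt (ell t) * Real.sqrt (ell t) = ell t := Real.mul_self_sqrt hℓ.le
  have h4γ : 4 * γ ≤ Real.sqrt (ell t) := by
    have h' : Real.sqrt ((4*γ)^2) ≤ Real.sqrt (ell t) := by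
      apply Real.sqrt_le_sqrt; nlinarith
    rwa [Real.sqrt_sq (by linarith)] at h'
  have hlogb : Real.log (ell t) ≤ 2 * Real.sqrt (ell t) := by
    have h1' : Real.log (Real.sqrt (ell t)) = Real.log (ell t) / 2 := Real.log_sqrt hℓ.le
    have h2' : Real.log (Real.sqrt (ell t)) ≤ Real.sqrt (ell t) - 1 :=
      Real.log_le_sub_one_of_pos (Real.sqrt_pos.mpr hℓ)
    linarith
  have hbound : γ * Real.log (ell t) ≤ ell t / 2 := by nlinarith
  have hu1 : ell t / 2 ≤ ell (t * ell t ^ γ) := by rw [hu]; linarith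
  have hu2 : ell (t * ell t ^ γ) ≤ ell t := by rw [hu]; nlinarith
  have hupos : 0 < ell (t * ell t ^ γ) := by linarith
  constructor
  · show 1 * (ell (t * (ell t ^ α / ell t ^ (-β)) ^ p) ^ α) ≤ ell t ^ α
    rw [one_mul, h1, h2]
    exact Real.rpow_le_rpow hupos.le hu2 hα
  · show ell t ^ α ≤ 2 ^ α * (ell (t * (ell t ^ α / ell t ^ (-β)) ^ p) ^ α)
    rw [h1, h2]
    calc ell t ^ α ≤ (2 * ell (t * ell t ^ γ)) ^ α :=
          Real.rpow_le_rpow hℓ.le (by linarith) hα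
      _ = 2 ^ α * ell (t * ell t ^ γ) ^ α := Real.mul_rpow (by norm_num) hupos.le

lemma integrable_integrand (a t : ℝ) (ht : 0 < t) :
    MeasureTheory.IntegrableOn (fun s => 1 / (s * ell s ^ a)) (Ioo t 1) := by
  exact ((cont_integrand a t ht).integrableOn_Icc).mono_set Ioo_subset_Icc_self

lemma int_upper_s17 (a b t : ℝ) (hb : 0 < b) (hab : 1 ≤ a + b) (ha0 : 0 ≤ a)
    (ht : t ∈ Ioo (0:ℝ) 1) :
    ell t ^ (-b) * ∫ s in Ioo t 1, 1 / (s * ell s ^ a) ≤ 1 / (1 - min a (1 - b/2)) := by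
  set a' := min a (1 - b/2) with ha'def
  have ha'a : a' ≤ a := min_le_left _ _
  have ha'1 : a' < 1 := lt_of_le_of_lt (min_le_right _ _) (by linarith)
  have h1a' : 1 - a' ≤ b := by
    have h1 : 1 - b ≤ a := by linarith
    have h2 : 1 - b ≤ 1 - b/2 := by linarith
    have : 1 - b ≤ a' := le_min h1 h2
    linarith
  have hℓ1 : 1 ≤ ell t := one_le_ell ht.1 ht.2.le
  have hℓ : 0 < ell t := by linarith
  have step1 : (∫ s in Ioo t 1, 1 / (s * ell s ^ a)) ≤
      ∫ s in Ioo t 1, 1 / (s * ell s ^ a') := by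
    apply MeasureTheory.setIntegral_mono_on (integrable_integrand a t ht.1)
      (integrable_integrand a' t ht.1) measurableSet_Ioo
    intro s hs
    have hs0 : 0 < s := ht.1.trans hs.1
    have hsℓ1 : 1 ≤ ell s := one_le_ell hs0 hs.2.le
    have h1 : ell s ^ a' ≤ ell s ^ a := Real.rpow_le_rpow_of_exponent_le hsℓ1 ha'a
    have h2 : 0 < s * ell s ^ a' := by
      have := Real.rpow_pos_of_pos (by linarith : (0:ℝ) < ell s) a'
      positivity
    apply one_div_le_one_div_of_le h2
    exact mul_le_mul_of_nonneg_left h1 hs0.le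
  have step2 : (∫ s in Ioo t 1, 1 / (s * ell s ^ a')) ≤ ell t ^ b / (1 - a') := by
    rw [int_val a' t ht.1 ht.2.le (ne_of_lt ha'1)]
    have e1 : ell t ^ (1-a') - 1 ≤ ell t ^ b := by
      have := Real.rpow_le_rpow_of_exponent_le hℓ1 h1a'
      linarith
    exact (div_le_div_iff_of_pos_right (by linarith)).mpr e1
  have h3 : 0 ≤ ell t ^ (-b) := (Real.rpow_pos_of_pos hℓ _).le
  calc ell t ^ (-b) * ∫ s in Ioo t 1, 1 / (s * ell s ^ a)
      ≤ ell t ^ (-b) * (ell t ^ b / (1 - a')) :=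
        mul_le_mul_of_nonneg_left (step1.trans step2) h3
    _ = (ell t ^ (-b) * ell t ^ b) / (1 - a') := by ring
    _ = 1 / (1 - a') := by
        rw [← Real.rpow_add hℓ, neg_add_cancel, Real.rpow_zero]

lemma int_upper_b0 (a t : ℝ) (ha : 1 < a) (ht : t ∈ Ioo (0:ℝ) 1) :
    (∫ s in Ioo t 1, 1 / (s * ell s ^ a)) ≤ 1 / (a - 1) := by
  rw [int_val a t ht.1 ht.2.le (by linarith)]
  have hX : 0 ≤ ell t ^ (1 - a) := (Real.rpow_pos_of_pos (ell_pos ht.1 ht.2.le) _).le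
  have e1 : (ell t ^ (1-a) - 1) / (1-a) = (1 - ell t ^ (1-a)) / (a-1) := by
    rw [show (1:ℝ) - a = -(a-1) by ring, div_neg, ← neg_div]
    ring_nf
  rw [e1]
  exact (div_le_div_iff_of_pos_right (by linarith)).mpr (by linarith)

lemma forward_bound (a b M : ℝ) (ha : a < 1) (hb : 0 ≤ b)
    (hM : ∀ t ∈ Ioo (0:ℝ) 1, ell t ^ (-b) * ∫ s in Ioo t 1, 1 / (s * ell s ^ a) ≤ M) :
    1 ≤ a + b := by
  by_contra hcon
  push_neg at hcon
  set c := 1 - a - b with hcdef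
  have hc0 : 0 < c := by rw [hcdef]; linarith
  set c₁ := |M| * (1-a) + 1 with hc₁def
  have hc₁ : 1 ≤ c₁ := by
    have : 0 ≤ |M| * (1-a) := mul_nonneg (abs_nonneg M) (by linarith)
    rw [hc₁def]; linarith
  set L := max 2 ((c₁+1) ^ c⁻¹) with hLdef
  have hL2 : (2:ℝ) ≤ L := le_max_left _ _
  have hL0 : (0:ℝ) < L := by linarith
  set t := Real.exp (1 - L) with htdef
  have htmem : t ∈ Ioo (0:ℝ) 1 := ⟨Real.exp_pos _, t0_lt_one hL2⟩
  have hval := hM t htmem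
  rw [int_val a t htmem.1 htmem.2.le (by linarith), ell_exp] at hval
  -- hval : L ^ (-b) * ((L ^ (1-a) - 1) / (1-a)) ≤ M
  have hLb : 0 < L ^ (-b) := Real.rpow_pos_of_pos hL0 _
  have hLb1 : L ^ (-b) ≤ 1 :=
    Real.rpow_le_one_of_one_le_of_nonpos (by linarith) (neg_nonpos.mpr hb)
  have hprod : L ^ (-b) * L ^ (1-a) = L ^ c := by
    rw [← Real.rpow_add hL0]; congr 1; rw [hcdef]; ring
  have hmul : L ^ (-b) * (L ^ (1-a) - 1) ≤ M * (1-a) := by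
    have h' : L ^ (-b) * ((L ^ (1-a) - 1) / (1-a)) * (1-a) ≤ M * (1-a) :=
      mul_le_mul_of_nonneg_right hval (by linarith)
    have e : L ^ (-b) * ((L ^ (1-a) - 1) / (1-a)) * (1-a) = L ^ (-b) * (L ^ (1-a) - 1) := by
      rw [mul_assoc, div_mul_cancel₀ _ (ne_of_gt (by linarith : (0:ℝ) < 1-a))]
    linarith [e ▸ h']
  have hkey : L ^ c ≤ c₁ := by
    have h1 : L ^ c - L ^ (-b) ≤ M * (1-a) := by
      have : L ^ (-b) * (L ^ (1-a) - 1) = L ^ c - L ^ (-b) := by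
        rw [mul_sub, hprod, mul_one]
      linarith [this ▸ hmul]
    have h2 : M * (1-a) ≤ |M| * (1-a) := mul_le_mul_of_nonneg_right (le_abs_self M) (by linarith)
    rw [hc₁def]; linarith
  have hbig : c₁ + 1 ≤ L ^ c := by
    have h0 : (0:ℝ) ≤ (c₁+1) ^ c⁻¹ := (Real.rpow_pos_of_pos (by linarith) _).le
    have h1 : ((c₁+1) ^ c⁻¹) ^ c ≤ L ^ c :=
      Real.rpow_le_rpow h0 (le_max_right _ _) hc0.le
    have h2 : ((c₁+1) ^ c⁻¹) ^ c = c₁ + 1 := by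
      rw [← Real.rpow_mul (by linarith : (0:ℝ) ≤ c₁+1), inv_mul_cancel₀ hc0.ne',
        Real.rpow_one]
    linarith [h2 ▸ h1]
  linarith

lemma forward_bound_one (M : ℝ)
    (hM : ∀ t ∈ Ioo (0:ℝ) 1, ∫ s in Ioo t 1, 1 / (s * ell s ^ (1:ℝ)) ≤ M) : False := by
  set L := Real.exp (|M| + 1) with hLdef
  have hL1 : (1:ℝ) < L := Real.one_lt_exp_iff.mpr (by positivity)
  set t := Real.exp (1 - L) with htdef
  have htmem : t ∈ Ioo (0:ℝ) 1 := ⟨Real.exp_pos _, Real.exp_lt_one_iff.mpr (by linarith)⟩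
  have hval := hM t htmem
  rw [int_val_one t htmem.1 htmem.2.le, ell_exp, hLdef, Real.log_exp] at hval
  have := le_abs_self M
  linarith

lemma d_eq (p α β t : ℝ) (ht : t ∈ Ioo (0:ℝ) 1) :
    ((1 - Real.log t) ^ (-β)) ^ p * ∫ s in Ioo t 1, 1 / (s * ((1 - Real.log s) ^ α) ^ p)
      = ell t ^ (-(β*p)) * ∫ s in Ioo t 1, 1 / (s * ell s ^ (α*p)) := by
  have hℓt : (0:ℝ) ≤ ell t := (ell_pos ht.1 ht.2.le).le
  have e1 : ((1 - Real.log t) ^ (-β) : ℝ) ^ p = ell t ^ (-(β*p)) := by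
    rw [show ((1:ℝ) - Real.log t) = ell t from rfl, ← Real.rpow_mul hℓt]
    congr 1; ring
  have e2 : (∫ s in Ioo t 1, 1 / (s * ((1 - Real.log s) ^ α) ^ p)) =
      ∫ s in Ioo t 1, 1 / (s * ell s ^ (α*p)) := by
    apply MeasureTheory.setIntegral_congr_fun measurableSet_Ioo
    intro s hs
    have hs0 : (0:ℝ) < s := ht.1.trans hs.1
    have hℓs : (0:ℝ) ≤ ell s := (ell_pos hs0 hs.2.le).le
    show 1 / (s * ((1 - Real.log s) ^ α) ^ p) = 1 / (s * ell s ^ (α*p))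
    rw [show ((1:ℝ) - Real.log s) = ell s from rfl, ← Real.rpow_mul hℓs]
  rw [e1, e2]


end
theorem stmt_17 (p : ℝ) (hp : 0 < p) (α β : ℝ) (hα : 0 ≤ α) (hβ : 0 ≤ β) :
    InBp p (fun t => (1 - Real.log t) ^ α) (fun t => (1 - Real.log t) ^ (-β)) ↔
      ((1/p ≤ α + β ∧ 0 < β) ∨ (1/p < α ∧ β = 0)) := by
  constructor
  · rintro ⟨-, -, -, -, -, -, -, M, hM⟩
    have hM' : ∀ t ∈ Ioo (0:ℝ) 1,
        ell t ^ (-(β*p)) * ∫ s in Ioo t 1, 1 / (s * ell s ^ (α*p)) ≤ M := by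
      intro t ht
      have h := hM t ht
      rwa [d_eq p α β t ht] at h
    by_cases hβ0 : β = 0
    · subst hβ0
      right
      refine ⟨?_, rfl⟩
      rw [div_lt_iff₀ hp]
      by_contra hle
      push_neg at hle
      have hM'' : ∀ t ∈ Ioo (0:ℝ) 1, (∫ s in Ioo t 1, 1 / (s * ell s ^ (α*p))) ≤ M := by
        intro t ht
        have h := hM' t ht
        rwa [show (-(0*p) : ℝ) = 0 by ring, Real.rpow_zero, one_mul] at h
      rcases eq_or_lt_of_le hle with heq | hlt
      · exact (forward_bound_one M (fun t ht => by
          have h := hM'' t ht; rwa [heq] at h)).elim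
      · have := forward_bound (α*p) 0 M hlt le_rfl (fun t ht => by
          rw [neg_zero, Real.rpow_zero, one_mul]; exact hM'' t ht)
        linarith
    · left
      have hβpos : 0 < β := lt_of_le_of_ne hβ (Ne.symm hβ0)
      refine ⟨?_, hβpos⟩
      rw [div_le_iff₀ hp]
      by_contra hcon
      push_neg at hcon
      have ha1 : α*p < 1 := by nlinarith
      have := forward_bound (α*p) (β*p) M ha1 (by positivity) hM'
      nlinarith
  · intro hcase
    refine ⟨sv_ell_rpow α, sv_ell_rpow (-β), cont_ell_rpow α, cont_ell_rpow (-β),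
      ?_, ?_, ?_, ?_⟩
    · intro x hx y hy hxy
      exact Real.rpow_le_rpow (ell_pos hy.1 hy.2.le).le (ell_anti hx.1 hxy) hα
    · intro x hx y hy hxy
      exact Real.rpow_le_rpow_of_nonpos (ell_pos hy.1 hy.2.le) (ell_anti hx.1 hxy)
        (neg_nonpos.mpr hβ)
    · exact cond_c p α β hp hα hβ
    · rcases hcase with ⟨h1, hβpos⟩ | ⟨h1, hβ0⟩
      · refine ⟨1 / (1 - min (α*p) (1 - (β*p)/2)), ?_⟩
        intro t ht
        rw [d_eq p α β t ht]
        have hab : 1 ≤ α*p + β*p := by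
          have := (div_le_iff₀ hp).mp h1
          nlinarith
        exact int_upper_s17 (α*p) (β*p) t (by positivity) hab (by positivity) ht
      · subst hβ0
        refine ⟨1 / (α*p - 1), ?_⟩
        intro t ht
        rw [d_eq p α 0 t ht, show (-(0*p) : ℝ) = 0 by ring, Real.rpow_zero, one_mul]
        have ha1 : 1 < α*p := by
          have := (div_lt_iff₀ hp).mp h1
          linarith
        exact int_upper_b0 (α*p) t ha1 ht
end

section
/- Let p ∈ (0,∞) and (b_1,b_2) ∈ B_p with b_1/b_2 strictly decreasing. Then lim_{s→0^+} b_1(s)^p ∫_s^1 dτ/(τ b_1(τ)^p) = ∞ and lim_{s→0^+} b_1(s)/b_2(s) = ∞. -/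
open MeasureTheory Set ENNReal Filter Topology

theorem stmt_18 (p : ℝ) (hp : 0 < p) (b1 b2 : ℝ → ℝ) (hB : InBp p b1 b2)
    (hsd : StrictAntiOn (fun t => b1 t / b2 t) (Ioo (0:ℝ) 1)) :
    Tendsto (fun s => b1 s ^ p * ∫ τ in Ioo s 1, 1 / (τ * b1 τ ^ p))
      (𝓝[>] (0:ℝ)) atTop ∧
    Tendsto (fun s => b1 s / b2 s) (𝓝[>] (0:ℝ)) atTop := by
  obtain ⟨hsv1, hsv2, -, -, hanti, -, -, M, hM⟩ := hB
  obtain ⟨hmeas1, hpos1, hsv⟩ := hsv1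
  obtain ⟨-, hpos2, -⟩ := hsv2
  obtain ⟨⟨be, hbe_mono, c, C, hc, hC, hbe⟩, -⟩ := hsv 1 one_pos
  have hfm : Measurable (fun τ : ℝ => 1 / (τ * b1 τ ^ p)) :=
    Measurable.const_div (measurable_id.mul
      (((Real.continuous_rpow_const hp.le).measurable).comp hmeas1)) 1
  -- lower bound for b1 on tails
  have hlow : ∀ s ∈ Ioo (0:ℝ) 1, ∀ τ ∈ Ioo s 1, c / C * (s * b1 s) ≤ b1 τ := by
    intro s hs τ hτ
    have hτ01 : τ ∈ Ioo (0:ℝ) 1 := ⟨hs.1.trans hτ.1, hτ.2⟩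
    obtain ⟨h1a, h1b⟩ := hbe s hs
    obtain ⟨h2a, h2b⟩ := hbe τ hτ01
    simp only [Real.rpow_one] at h1a h1b h2a h2b
    have hbes : be s ≤ be τ := hbe_mono hs hτ01 hτ.1.le
    have hmain : c / C * (s * b1 s) ≤ τ * b1 τ := by
      calc c / C * (s * b1 s) ≤ c / C * (C * be s) := by
            apply mul_le_mul_of_nonneg_left h1b (by positivity)
        _ = c * be s := by field_simp
        _ ≤ c * be τ := mul_le_mul_of_nonneg_left hbes hc.le
        _ ≤ τ * b1 τ := h2a
    nlinarith [hpos1 τ hτ01, hτ01.2]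
  -- integrability
  have hint : ∀ s ∈ Ioo (0:ℝ) 1, IntegrableOn (fun τ => 1 / (τ * b1 τ ^ p)) (Ioo s 1) := by
    intro s hs
    have hb1s : 0 < b1 s := hpos1 s hs
    set m := c / C * (s * b1 s) with hm
    have hmpos : 0 < m := by have := hs.1; positivity
    apply Measure.integrableOn_of_bounded (M := 1 / (s * m ^ p)) measure_Ioo_lt_top.ne
      hfm.aestronglyMeasurable
    refine ae_restrict_of_forall_mem measurableSet_Ioo ?_
    intro τ hτ
    have hτ01 : τ ∈ Ioo (0:ℝ) 1 := ⟨hs.1.trans hτ.1, hτ.2⟩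
    have hbp : m ^ p ≤ b1 τ ^ p := Real.rpow_le_rpow hmpos.le (hlow s hs τ hτ) hp.le
    have hbτ : 0 < b1 τ ^ p := Real.rpow_pos_of_pos (hpos1 τ hτ01) p
    have hτ0 : 0 < τ := hτ01.1
    rw [Real.norm_eq_abs, abs_of_pos (by positivity)]
    apply one_div_le_one_div_of_le (by have := hs.1; positivity)
    exact mul_le_mul hτ.1.le hbp (by positivity) hτ0.le
  -- key lower bound
  have hkey : ∀ s ∈ Ioo (0:ℝ) 1,
      -Real.log s ≤ b1 s ^ p * ∫ τ in Ioo s 1, 1 / (τ * b1 τ ^ p) := by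
    intro s hs
    have hb1s : 0 < b1 s := hpos1 s hs
    have h1τ : IntegrableOn (fun τ : ℝ => 1/τ) (Ioo s 1) := by
      apply Measure.integrableOn_of_bounded (M := 1 / s) measure_Ioo_lt_top.ne
        (Measurable.const_div measurable_id 1).aestronglyMeasurable
      refine ae_restrict_of_forall_mem measurableSet_Ioo ?_
      intro τ hτ
      have hτ0 : 0 < τ := hs.1.trans hτ.1
      rw [Real.norm_eq_abs, abs_of_pos (by positivity)]
      exact one_div_le_one_div_of_le hs.1 hτ.1.le
    have hmono : ∫ τ in Ioo s 1, 1/τ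
        ≤ ∫ τ in Ioo s 1, b1 s ^ p * (1 / (τ * b1 τ ^ p)) := by
      apply setIntegral_mono_on h1τ ((hint s hs).const_mul _) measurableSet_Ioo
      intro τ hτ
      have hτ01 : τ ∈ Ioo (0:ℝ) 1 := ⟨hs.1.trans hτ.1, hτ.2⟩
      have hbτ : 0 < b1 τ := hpos1 τ hτ01
      have h1 : b1 τ ^ p ≤ b1 s ^ p :=
        Real.rpow_le_rpow hbτ.le (hanti hs hτ01 hτ.1.le) hp.le
      have hbτp : 0 < b1 τ ^ p := Real.rpow_pos_of_pos hbτ p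
      have hτ0 : 0 < τ := hτ01.1
      rw [mul_one_div, div_le_div_iff₀ hτ0 (by positivity)]
      nlinarith [mul_le_mul_of_nonneg_left h1 hτ0.le]
    rw [integral_const_mul] at hmono
    have hlog : ∫ τ in Ioo s 1, 1/τ = -Real.log s := by
      have h0 : (0:ℝ) ∉ Set.uIcc s 1 := by
        rw [Set.uIcc_of_le hs.2.le]
        intro h
        exact hs.1.not_ge (mem_Icc.mp h).1
      rw [← integral_Ioc_eq_integral_Ioo, ← intervalIntegral.integral_of_le hs.2.le,
        integral_one_div h0, one_div, Real.log_inv]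
    rw [← hlog]
    exact hmono
  have part1 : Tendsto (fun s => b1 s ^ p * ∫ τ in Ioo s 1, 1 / (τ * b1 τ ^ p))
      (𝓝[>] (0:ℝ)) atTop := by
    have hev : ∀ᶠ s in 𝓝[>] (0:ℝ),
        -Real.log s ≤ b1 s ^ p * ∫ τ in Ioo s 1, 1 / (τ * b1 τ ^ p) := by
      filter_upwards [Ioo_mem_nhdsGT_of_mem (by constructor <;> norm_num :
        (0:ℝ) ∈ Ico (0:ℝ) 1)] with s hs using hkey s hs
    exact tendsto_atTop_mono' _ hev
      (tendsto_neg_atBot_iff.mp (by simpa using Real.tendsto_log_nhdsGT_zero))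
  refine ⟨part1, ?_⟩
  rw [tendsto_atTop]
  intro K
  set K' := max K 1 with hK'
  have hK'pos : (0:ℝ) < K' := lt_of_lt_of_le one_pos (le_max_right _ _)
  have hK'p : 0 < K' ^ p := Real.rpow_pos_of_pos hK'pos p
  have hex : ∃ s0 ∈ Ioo (0:ℝ) 1, K' < b1 s0 / b2 s0 := by
    by_contra hcon
    push_neg at hcon
    have hev := (part1.eventually_gt_atTop (K' ^ p * (|M| + 1))).and
      (eventually_mem_nhdsWithin.mono (fun x hx => hx) |>.and
        (Ioo_mem_nhdsGT_of_mem (by constructor <;> norm_num : (0:ℝ) ∈ Ico (0:ℝ) 1)))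
    obtain ⟨s, hs2, -, hs01⟩ := hev.exists
    have hb1s : 0 < b1 s := hpos1 s hs01
    have hb2s : 0 < b2 s := hpos2 s hs01
    have hle : b1 s ≤ K' * b2 s := (div_le_iff₀ hb2s).mp (hcon s hs01)
    have hpow : b1 s ^ p ≤ K' ^ p * b2 s ^ p := by
      calc b1 s ^ p ≤ (K' * b2 s) ^ p := Real.rpow_le_rpow hb1s.le hle hp.le
        _ = K' ^ p * b2 s ^ p := Real.mul_rpow hK'pos.le hb2s.le
    have hInn : 0 ≤ ∫ τ in Ioo s 1, 1 / (τ * b1 τ ^ p) := by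
      apply setIntegral_nonneg measurableSet_Ioo
      intro τ hτ
      have hτ0 : 0 < τ := hs01.1.trans hτ.1
      have : 0 < b1 τ ^ p := Real.rpow_pos_of_pos (hpos1 τ ⟨hτ0, hτ.2⟩) p
      positivity
    have hchain : b1 s ^ p * ∫ τ in Ioo s 1, 1 / (τ * b1 τ ^ p)
        ≤ K' ^ p * M := by
      calc b1 s ^ p * ∫ τ in Ioo s 1, 1 / (τ * b1 τ ^ p)
          ≤ (K' ^ p * b2 s ^ p) * ∫ τ in Ioo s 1, 1 / (τ * b1 τ ^ p) :=
            mul_le_mul_of_nonneg_right hpow hInn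
        _ = K' ^ p * (b2 s ^ p * ∫ τ in Ioo s 1, 1 / (τ * b1 τ ^ p)) := by ring
        _ ≤ K' ^ p * M := mul_le_mul_of_nonneg_left (hM s hs01) hK'p.le
    nlinarith [le_abs_self M]
  obtain ⟨s0, hs0, hgt⟩ := hex
  filter_upwards [Ioo_mem_nhdsGT_of_mem
    (show (0:ℝ) ∈ Ico (0:ℝ) s0 from ⟨le_refl _, hs0.1⟩)] with s hs
  have hlt : b1 s0 / b2 s0 < b1 s / b2 s :=
    hsd ⟨hs.1, hs.2.trans hs0.2⟩ hs0 hs.2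
  have := le_max_left K 1
  linarith
end
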